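/- arXiv:2402.07099 — 5 statements merged into one kernel-verified Lean document; each statement's English description precedes it below -/
import Mathlib

section
/- Let G⁽¹⁾ and G⁽²⁾ be the two MILP instances of size (8,8) defined in the context. Then SB(G⁽¹⁾) ≠ SB(G⁽²⁾), yet every MP-GNN F of size (8,8) satisfies F(G⁽¹⁾) = F(G⁽²⁾). -/
open scoped BigOperators Classical
open MeasureTheory

noncomputable section

/-- Type of constraint senses: `0` is `≤`, `1` is `=`, `2` is `≥`. -/
abbrev Sense : Type := Fin 3

/-- Extended lower bounds: `Sum.inl a` is a real bound, `Sum.inr ()` is `-∞`. -/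
abbrev ExtLo : Type := ℝ ⊕ Unit

/-- Extended upper bounds: `Sum.inl a` is a real bound, `Sum.inr ()` is `+∞`. -/
abbrev ExtHi : Type := ℝ ⊕ Unit

def senseRel (s : Sense) (a b : ℝ) : Prop :=
  if s = 0 then a ≤ b else if s = 1 then a = b else b ≤ a

def loSat (lo : ExtLo) (x : ℝ) : Prop :=
  match lo with
  | Sum.inl a => a ≤ x
  | Sum.inr _ => True

def hiSat (hi : ExtHi) (x : ℝ) : Prop :=
  match hi with
  | Sum.inl a => x ≤ a
  | Sum.inr _ => True

/-- The space `𝒢_{m,n}` of MILP instances of size `(m,n)`: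
`(A, b, c, ∘, l, u, I)`, with `I` encoded as a Boolean indicator vector. -/
abbrev MILP (m n : ℕ) : Type :=
  (Fin m → Fin n → ℝ) × (Fin m → ℝ) × (Fin n → ℝ) × (Fin m → Sense) ×
  (Fin n → ExtLo) × (Fin n → ExtHi) × (Fin n → Bool)

namespace MILP

variable {m n : ℕ}

def A (G : MILP m n) : Fin m → Fin n → ℝ := G.1
def b (G : MILP m n) : Fin m → ℝ := G.2.1
def c (G : MILP m n) : Fin n → ℝ := G.2.2.1
def sense (G : MILP m n) : Fin m → Sense := G.2.2.2.1
def lo (G : MILP m n) : Fin n → ExtLo := G.2.2.2.2.1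
def hi (G : MILP m n) : Fin n → ExtHi := G.2.2.2.2.2.1
def isInt (G : MILP m n) : Fin n → Bool := G.2.2.2.2.2.2

end MILP

/-- Satisfaction of the linear constraints `(Ax) ∘ b`. -/
def consSat {m n : ℕ} (G : MILP m n) (x : Fin n → ℝ) : Prop :=
  ∀ i, senseRel (MILP.sense G i) (∑ j, MILP.A G i j * x j) (MILP.b G i)

/-- Feasible set of the LP relaxation of `G`. -/
def lpFeasSet {m n : ℕ} (G : MILP m n) : Set (Fin n → ℝ) :=
  {x | consSat G x ∧ ∀ j, loSat (MILP.lo G j) (x j) ∧ hiSat (MILP.hi G j) (x j)}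

/-- Feasible set of `LP(G, j, lo', hi')`: the LP relaxation of `G` with the bound
constraint on variable `j` replaced by `lo' ≤ x_j ≤ hi'`. -/
def feasSetMod {m n : ℕ} (G : MILP m n) (j : Fin n) (lo' : ExtLo) (hi' : ExtHi) :
    Set (Fin n → ℝ) :=
  {x | consSat G x ∧ (∀ j', j' ≠ j → loSat (MILP.lo G j') (x j') ∧ hiSat (MILP.hi G j') (x j'))
      ∧ loSat lo' (x j) ∧ hiSat hi' (x j)}

/-- Optimal value (in `ℝ ∪ {±∞}`) of the LP `min cᵀx` over `S`:
`+∞` if infeasible, `-∞` if unbounded below. -/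
def lpVal {n : ℕ} (c : Fin n → ℝ) (S : Set (Fin n → ℝ)) : EReal :=
  ⨅ x ∈ S, ((∑ j, c j * x j : ℝ) : EReal)

/-- `f*(G)`: optimal value of the LP relaxation of `G`. -/
def fstar {m n : ℕ} (G : MILP m n) : EReal := lpVal (MILP.c G) (lpFeasSet G)

/-- `f*(G, j, lo', hi')`: optimal value of `LP(G, j, lo', hi')`. -/
def lpValMod {m n : ℕ} (G : MILP m n) (j : Fin n) (lo' : ExtLo) (hi' : ExtHi) : EReal :=
  lpVal (MILP.c G) (feasSetMod G j lo' hi')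

/-- The Euclidean norm on `ℝⁿ` (as `Fin n → ℝ`). -/
def euclNorm {n : ℕ} (x : Fin n → ℝ) : ℝ := Real.sqrt (∑ j, x j ^ 2)

/-- The Euclidean distance on `ℝⁿ`. -/
def euclDist {n : ℕ} (x y : Fin n → ℝ) : ℝ := euclNorm (fun j => x j - y j)

/-- `x` is an optimal solution of the LP relaxation of `G`. -/
def IsOptSol {m n : ℕ} (G : MILP m n) (x : Fin n → ℝ) : Prop :=
  x ∈ lpFeasSet G ∧ ((∑ j, MILP.c G j * x j : ℝ) : EReal) = fstar G

/-- `x` is an optimal solution of smallest Euclidean norm of the LP relaxation of `G`. -/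
def IsMinNormOpt {m n : ℕ} (G : MILP m n) (x : Fin n → ℝ) : Prop :=
  IsOptSol G x ∧ ∀ y, IsOptSol G y → euclNorm x ≤ euclNorm y

/-- `x*(G)`: the optimal solution of smallest Euclidean norm of the LP relaxation
(defaults to `0` when it does not exist). -/
def xstar {m n : ℕ} (G : MILP m n) : Fin n → ℝ :=
  if h : ∃ x, IsMinNormOpt G x then h.choose else 0

/-- `f*(G, j, l_j, ⌊x*(G)_j⌋)`. -/
def branchDown {m n : ℕ} (G : MILP m n) (j : Fin n) : EReal :=
  lpValMod G j (MILP.lo G j) (Sum.inl ((⌊xstar G j⌋ : ℤ) : ℝ))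

/-- `f*(G, j, ⌈x*(G)_j⌉, u_j)`. -/
def branchUp {m n : ℕ} (G : MILP m n) (j : Fin n) : EReal :=
  lpValMod G j (Sum.inl ((⌈xstar G j⌉ : ℤ) : ℝ)) (MILP.hi G j)

/-- The strong branching score vector `SB(G) ∈ ℝⁿ`. -/
def SB {m n : ℕ} (G : MILP m n) : Fin n → ℝ := fun j =>
  if MILP.isInt G j then
    ((branchDown G j).toReal - (fstar G).toReal) * ((branchUp G j).toReal - (fstar G).toReal)
  else 0

/-- `SB(G) ∈ ℝⁿ`: the LP relaxation of `G` is feasible and bounded (so that the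
min-norm optimal solution `x*(G)` exists and `f*(G)` is finite), and all the
branch LP values entering the strong branching scores are finite. -/
def SBRealValued {m n : ℕ} (G : MILP m n) : Prop :=
  (∃ x, IsMinNormOpt G x) ∧ fstar G ≠ ⊤ ∧ fstar G ≠ ⊥ ∧
  ∀ j, MILP.isInt G j →
    branchDown G j ≠ ⊤ ∧ branchDown G j ≠ ⊥ ∧ branchUp G j ≠ ⊤ ∧ branchUp G j ≠ ⊥

/-! ### WL colors -/

abbrev VFeat : Type := ℝ × Sense
abbrev WFeat : Type := ℝ × ExtLo × ExtHi × Bool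

/-- The pair (type of constraint-node colors, type of variable-node colors) at
each round of the WL test. -/
def WLTypes : ℕ → Type × Type
  | 0 => (VFeat, WFeat)
  | l + 1 =>
      ((WLTypes l).1 × Multiset ((WLTypes l).2 × ℝ),
       (WLTypes l).2 × Multiset ((WLTypes l).1 × ℝ))

abbrev VColor (l : ℕ) : Type := (WLTypes l).1
abbrev WColor (l : ℕ) : Type := (WLTypes l).2

/-- The canonical WL colors of a MILP instance: `(wl G l).1 i = C_l^V(i)` and
`(wl G l).2 j = C_l^W(j)`. -/
def wl {m n : ℕ} (G : MILP m n) : (l : ℕ) → (Fin m → VColor l) × (Fin n → WColor l)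
  | 0 =>
      (fun i => (MILP.b G i, MILP.sense G i),
       fun j => (MILP.c G j, MILP.lo G j, MILP.hi G j, MILP.isInt G j))
  | l + 1 =>
      (fun i => ((wl G l).1 i,
        (Finset.univ.filter (fun j => MILP.A G i j ≠ 0)).val.map
          (fun j => ((wl G l).2 j, MILP.A G i j))),
       fun j => ((wl G l).2 j,
        (Finset.univ.filter (fun i => MILP.A G i j ≠ 0)).val.map
          (fun i => ((wl G l).1 i, MILP.A G i j))))

/-- `G` is message-passing-tractable: whenever two constraints and two variables are
respectively indistinguishable by all rounds of the WL test, the corresponding matrix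
entries agree (i.e. every submatrix of `A` over a pair of classes of the stable WL
partition is constant). -/
def MPTractable {m n : ℕ} (G : MILP m n) : Prop :=
  ∀ i i' j j', (∀ l, (wl G l).1 i = (wl G l).1 i') → (∀ l, (wl G l).2 j = (wl G l).2 j') →
    MILP.A G i j = MILP.A G i' j'

/-- `G ∼^W G2`. -/
def WLEquivW {m n : ℕ} (G G2 : MILP m n) : Prop :=
  ∀ l, Finset.univ.val.map ((wl G l).1) = Finset.univ.val.map ((wl G2 l).1)
    ∧ ∀ j, (wl G l).2 j = (wl G2 l).2 j

/-! ### MP-GNNs -/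

/-- A message-passing GNN of size `(m,n)`. -/
structure MPGNN (m n : ℕ) where
  L : ℕ
  d : ℕ → ℕ
  e : ℕ → ℕ
  p0 : ℝ × Sense → (Fin (d 0) → ℝ)
  q0 : ℝ × ExtLo × ExtHi × Bool → (Fin (d 0) → ℝ)
  f : (l : ℕ) → (Fin (d l) → ℝ) × ℝ → (Fin (e l) → ℝ)
  g : (l : ℕ) → (Fin (d l) → ℝ) × ℝ → (Fin (e l) → ℝ)
  p : (l : ℕ) → (Fin (d l) → ℝ) × (Fin (e l) → ℝ) → (Fin (d (l + 1)) → ℝ)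
  q : (l : ℕ) → (Fin (d l) → ℝ) × (Fin (e l) → ℝ) → (Fin (d (l + 1)) → ℝ)
  r : (Fin (d L) → ℝ) × (Fin (d L) → ℝ) × (Fin (d L) → ℝ) → ℝ
  p0_cont : Continuous p0
  q0_cont : Continuous q0
  f_cont : ∀ l, Continuous (f l)
  g_cont : ∀ l, Continuous (g l)
  p_cont : ∀ l, Continuous (p l)
  q_cont : ∀ l, Continuous (q l)
  r_cont : Continuous r
  f_zero : ∀ l t, f l (t, 0) = 0
  g_zero : ∀ l s, g l (s, 0) = 0

namespace MPGNN

variable {m n : ℕ}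

/-- The features of an MP-GNN on input `G` after `l` layers:
`(st N G l).1 i = s_i^l` and `(st N G l).2 j = t_j^l`. -/
def st (N : MPGNN m n) (G : MILP m n) :
    (l : ℕ) → (Fin m → (Fin (N.d l) → ℝ)) × (Fin n → (Fin (N.d l) → ℝ))
  | 0 =>
      (fun i => N.p0 (MILP.b G i, MILP.sense G i),
       fun j => N.q0 (MILP.c G j, MILP.lo G j, MILP.hi G j, MILP.isInt G j))
  | l + 1 =>
      (fun i => N.p l ((st N G l).1 i, ∑ j, N.f l ((st N G l).2 j, MILP.A G i j)),
       fun j => N.q l ((st N G l).2 j, ∑ i, N.g l ((st N G l).1 i, MILP.A G i j)))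

/-- The output `F(G) ∈ ℝⁿ` of an MP-GNN. -/
def eval (N : MPGNN m n) (G : MILP m n) : Fin n → ℝ := fun j =>
  N.r (∑ i, (st N G N.L).1 i, ∑ j', (st N G N.L).2 j', (st N G N.L).2 j)

end MPGNN

/-! ### 2-FWL colors -/

/-- The pair (type of `(V,W)`-pair colors, type of `(W,W)`-pair colors) at each
round of the 2-FWL test. -/
def FWLTypes : ℕ → Type × Type
  | 0 => (VFeat × WFeat × ℝ, WFeat × WFeat × Bool)
  | l + 1 =>
      ((FWLTypes l).1 × Multiset ((FWLTypes l).2 × (FWLTypes l).1),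
       (FWLTypes l).2 × Multiset ((FWLTypes l).1 × (FWLTypes l).1))

abbrev VWColor (l : ℕ) : Type := (FWLTypes l).1
abbrev WWColor (l : ℕ) : Type := (FWLTypes l).2

/-- The canonical 2-FWL colors of a MILP instance: `(fwl G l).1 i j = C_l^{VW}(i,j)` and
`(fwl G l).2 j₁ j₂ = C_l^{WW}(j₁,j₂)`. -/
def fwl {m n : ℕ} (G : MILP m n) :
    (l : ℕ) → (Fin m → Fin n → VWColor l) × (Fin n → Fin n → WWColor l)
  | 0 =>
      (fun i j => ((MILP.b G i, MILP.sense G i),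
        (MILP.c G j, MILP.lo G j, MILP.hi G j, MILP.isInt G j), MILP.A G i j),
       fun j1 j2 => ((MILP.c G j1, MILP.lo G j1, MILP.hi G j1, MILP.isInt G j1),
        (MILP.c G j2, MILP.lo G j2, MILP.hi G j2, MILP.isInt G j2), decide (j1 = j2)))
  | l + 1 =>
      (fun i j => ((fwl G l).1 i j,
        Finset.univ.val.map (fun j1 => ((fwl G l).2 j1 j, (fwl G l).1 i j1))),
       fun j1 j2 => ((fwl G l).2 j1 j2,
        Finset.univ.val.map (fun i => ((fwl G l).1 i j2, (fwl G l).1 i j1))))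

/-- `G ∼₂ G2`. -/
def FWLEquiv {m n : ℕ} (G G2 : MILP m n) : Prop :=
  ∀ l, (Finset.univ : Finset (Fin m × Fin n)).val.map (fun p => (fwl G l).1 p.1 p.2)
        = (Finset.univ : Finset (Fin m × Fin n)).val.map (fun p => (fwl G2 l).1 p.1 p.2)
    ∧ (Finset.univ : Finset (Fin n × Fin n)).val.map (fun p => (fwl G l).2 p.1 p.2)
        = (Finset.univ : Finset (Fin n × Fin n)).val.map (fun p => (fwl G2 l).2 p.1 p.2)

/-- `G ∼₂^W G2`. -/
def FWLEquivW {m n : ℕ} (G G2 : MILP m n) : Prop :=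
  ∀ l, ∀ j, Finset.univ.val.map (fun i => (fwl G l).1 i j)
        = Finset.univ.val.map (fun i => (fwl G2 l).1 i j)
    ∧ Finset.univ.val.map (fun j1 => (fwl G l).2 j1 j)
        = Finset.univ.val.map (fun j1 => (fwl G2 l).2 j1 j)

/-! ### 2-FGNNs -/

/-- A second-order folklore GNN of size `(m,n)`. -/
structure FGNN2 (m n : ℕ) where
  L : ℕ
  d : ℕ → ℕ
  e : ℕ → ℕ
  p0 : VFeat × WFeat × ℝ → (Fin (d 0) → ℝ)
  q0 : WFeat × WFeat × Bool → (Fin (d 0) → ℝ)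
  f : (l : ℕ) → (Fin (d l) → ℝ) × (Fin (d l) → ℝ) → (Fin (e l) → ℝ)
  g : (l : ℕ) → (Fin (d l) → ℝ) × (Fin (d l) → ℝ) → (Fin (e l) → ℝ)
  p : (l : ℕ) → (Fin (d l) → ℝ) × (Fin (e l) → ℝ) → (Fin (d (l + 1)) → ℝ)
  q : (l : ℕ) → (Fin (d l) → ℝ) × (Fin (e l) → ℝ) → (Fin (d (l + 1)) → ℝ)
  r : (Fin (d L) → ℝ) × (Fin (d L) → ℝ) → ℝ
  p0_cont : Continuous p0
  q0_cont : Continuous q0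
  f_cont : ∀ l, Continuous (f l)
  g_cont : ∀ l, Continuous (g l)
  p_cont : ∀ l, Continuous (p l)
  q_cont : ∀ l, Continuous (q l)
  r_cont : Continuous r

namespace FGNN2

variable {m n : ℕ}

/-- The features of a 2-FGNN on input `G` after `l` layers:
`(st N G l).1 i j = s_{ij}^l` and `(st N G l).2 j₁ j₂ = t_{j₁j₂}^l`. -/
def st (N : FGNN2 m n) (G : MILP m n) :
    (l : ℕ) → (Fin m → Fin n → (Fin (N.d l) → ℝ)) × (Fin n → Fin n → (Fin (N.d l) → ℝ))
  | 0 =>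
      (fun i j => N.p0 ((MILP.b G i, MILP.sense G i),
        (MILP.c G j, MILP.lo G j, MILP.hi G j, MILP.isInt G j), MILP.A G i j),
       fun j1 j2 => N.q0 ((MILP.c G j1, MILP.lo G j1, MILP.hi G j1, MILP.isInt G j1),
        (MILP.c G j2, MILP.lo G j2, MILP.hi G j2, MILP.isInt G j2), decide (j1 = j2)))
  | l + 1 =>
      (fun i j => N.p l ((st N G l).1 i j, ∑ j1, N.f l ((st N G l).2 j1 j, (st N G l).1 i j1)),
       fun j1 j2 => N.q l ((st N G l).2 j1 j2, ∑ i, N.g l ((st N G l).1 i j2, (st N G l).1 i j1)))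

/-- The output `F(G) ∈ ℝⁿ` of a 2-FGNN. -/
def eval (N : FGNN2 m n) (G : MILP m n) : Fin n → ℝ := fun j =>
  N.r (∑ i, (st N G N.L).1 i j, ∑ j1, (st N G N.L).2 j1 j)

end FGNN2


/-! ### The two 8×8 MILP instances from the paper -/

/-- Constraint pairs of the 8-cycle instance (problem (3.1)). -/
def cycPairs : Fin 8 → Fin 8 × Fin 8 :=
  ![(0,1),(1,2),(2,3),(3,4),(4,5),(5,6),(6,7),(7,0)]

/-- Constraint pairs of the two-triangles-plus-2-cycle instance (problem (3.2)). -/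
def triPairs : Fin 8 → Fin 8 × Fin 8 :=
  ![(0,1),(1,2),(2,0),(3,4),(4,5),(5,3),(6,7),(7,6)]

/-- The MILP `min ∑ x_j  s.t.  x_{p₁} + x_{p₂} ≥ 1` for each listed pair,
`0 ≤ x_j ≤ 1`, `x_j ∈ ℤ`. -/
def mkInstance (prs : Fin 8 → Fin 8 × Fin 8) : MILP 8 8 :=
  (fun i j => if j = (prs i).1 ∨ j = (prs i).2 then 1 else 0,
   fun _ => 1, fun _ => 1, fun _ => (2 : Sense),
   fun _ => Sum.inl 0, fun _ => Sum.inl 1, fun _ => true)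

/-- The MILP instance `G⁽¹⁾` of (3.1). -/
def Gcyc : MILP 8 8 := mkInstance cycPairs

/-- The MILP instance `G⁽²⁾` of (3.2). -/
def Gtri : MILP 8 8 := mkInstance triPairs

/-!
Both instances are `(2, 2)`-biregular bipartite graphs with unit weights and identical node
features, so by induction on the layers an MP-GNN assigns one common feature to all constraint
nodes and one to all variable nodes, and these features are the same for both instances.

The LP relaxations differ, though. Both have value `4`, attained by the constant vector `1/2`,
which is then the unique min-norm optimum. Branching on `x₀` in the 8-cycle keeps the value `4`
(alternating covers), so `SB(G⁽¹⁾)₀ = 0`; in `G⁽²⁾` the variable `x₀` lies on a triangle and both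
branches raise the value to `9/2`, so `SB(G⁽²⁾)₀ = 1/4`.
-/

open Finset

theorem sum_comp_eq_card_smul {ι α : Type*} [Fintype ι] [AddCommMonoid α] {x : ι → ℝ} {a : ℝ}
    {h : ℝ → α} (hx : ∀ j, x j = 0 ∨ x j = a) (h0 : h 0 = 0) :
    ∑ j, h (x j) = #{j | x j ≠ 0} • h a := by
  rw [← sum_filter_of_ne (p := fun j => x j ≠ 0) fun j _ hj => ?_, ← sum_const]
  · refine sum_congr rfl fun j hj => ?_
    rw [(hx j).resolve_left (mem_filter.1 hj).2]
  · rintro hxj; exact hj (hxj ▸ h0)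

structure IsUniformBiregular {m n : ℕ} (G : MILP m n) (v : VFeat) (w : WFeat) (a : ℝ) (dr dc : ℕ) :
    Prop where
  cons_feat : ∀ i, (MILP.b G i, MILP.sense G i) = v
  var_feat : ∀ j, (MILP.c G j, MILP.lo G j, MILP.hi G j, MILP.isInt G j) = w
  entry : ∀ i j, MILP.A G i j = 0 ∨ MILP.A G i j = a
  row_card : ∀ i, #{j | MILP.A G i j ≠ 0} = dr
  col_card : ∀ j, #{i | MILP.A G i j ≠ 0} = dc

namespace MPGNN

variable {m n : ℕ}

def uniformSt (N : MPGNN m n) (v : VFeat) (w : WFeat) (a : ℝ) (dr dc : ℕ) :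
    (l : ℕ) → (Fin (N.d l) → ℝ) × (Fin (N.d l) → ℝ)
  | 0 => (N.p0 v, N.q0 w)
  | l + 1 =>
      (N.p l ((uniformSt N v w a dr dc l).1, dr • N.f l ((uniformSt N v w a dr dc l).2, a)),
       N.q l ((uniformSt N v w a dr dc l).2, dc • N.g l ((uniformSt N v w a dr dc l).1, a)))

variable {N : MPGNN m n} {G : MILP m n} {v : VFeat} {w : WFeat} {a : ℝ} {dr dc : ℕ}

theorem st_of_isUniformBiregular (hG : IsUniformBiregular G v w a dr dc) (l : ℕ) :
    st N G l =
      (fun _ => (uniformSt N v w a dr dc l).1, fun _ => (uniformSt N v w a dr dc l).2) := by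
  induction l with
  | zero =>
    exact Prod.ext (funext fun i => congrArg N.p0 (hG.cons_feat i))
      (funext fun j => congrArg N.q0 (hG.var_feat j))
  | succ l ih =>
    refine Prod.ext (funext fun i => ?_) (funext fun j => ?_)
    · simp only [st, uniformSt, ih]
      rw [sum_comp_eq_card_smul (h := fun y => N.f l (_, y)) (hG.entry i) (N.f_zero l _),
        hG.row_card]
    · simp only [st, uniformSt, ih]
      rw [sum_comp_eq_card_smul (h := fun y => N.g l (_, y)) (fun i => hG.entry i j)
        (N.g_zero l _), hG.col_card]

theorem eval_of_isUniformBiregular (hG : IsUniformBiregular G v w a dr dc) :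
    eval N G = fun _ => N.r (m • (uniformSt N v w a dr dc N.L).1,
      n • (uniformSt N v w a dr dc N.L).2, (uniformSt N v w a dr dc N.L).2) := by
  funext j
  simp only [eval, st_of_isUniformBiregular hG, sum_const, card_univ, Fintype.card_fin]

theorem eval_eq_of_isUniformBiregular {G' : MILP m n} (hG : IsUniformBiregular G v w a dr dc)
    (hG' : IsUniformBiregular G' v w a dr dc) : eval N G = eval N G' := by
  rw [eval_of_isUniformBiregular hG, eval_of_isUniformBiregular hG']

end MPGNN

theorem mkInstance_A_ne_zero_iff {prs : Fin 8 → Fin 8 × Fin 8} {i j : Fin 8} :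
    MILP.A (mkInstance prs) i j ≠ 0 ↔ j = (prs i).1 ∨ j = (prs i).2 := by
  by_cases h : j = (prs i).1 ∨ j = (prs i).2 <;> simp [MILP.A, mkInstance, h]

theorem isUniformBiregular_mkInstance {prs : Fin 8 → Fin 8 × Fin 8} {d : ℕ}
    (hloop : ∀ i, (prs i).1 ≠ (prs i).2) (hdeg : ∀ j, #{i | j = (prs i).1 ∨ j = (prs i).2} = d) :
    IsUniformBiregular (mkInstance prs) (1, 2) (1, Sum.inl 0, Sum.inl 1, true) 1 2 d where
  cons_feat _ := rfl
  var_feat _ := rfl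
  entry i j := by by_cases h : j = (prs i).1 ∨ j = (prs i).2 <;> simp [MILP.A, mkInstance, h]
  row_card i := by
    rw [filter_congr fun j _ => mkInstance_A_ne_zero_iff, ← card_pair (hloop i)]
    congr 1; ext j; simp
  col_card j := by
    rw [filter_congr fun i _ => mkInstance_A_ne_zero_iff, hdeg]

theorem lpVal_eq_of_isLeast {n : ℕ} {c : Fin n → ℝ} {S : Set (Fin n → ℝ)} {v : ℝ}
    (h : IsLeast ((fun x => ∑ j, c j * x j) '' S) v) : lpVal c S = v := by
  obtain ⟨⟨x, hx, rfl⟩, hlow⟩ := h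
  refine le_antisymm (iInf₂_le x hx) (le_iInf₂ fun y hy => ?_)
  exact EReal.coe_le_coe_iff.2 (hlow ⟨y, hy, rfl⟩)

section MinNorm

variable {m n : ℕ} {G : MILP m n} {t : ℝ}

theorem sum_sq_sub_const_of_isOptSol (hc : MILP.c G = 1) (ht : IsOptSol G fun _ => t)
    {y : Fin n → ℝ} (hy : IsOptSol G y) :
    ∑ j, (y j - t) ^ 2 = ∑ j, y j ^ 2 - ∑ _j : Fin n, t ^ 2 := by
  have hsum : ∑ j, y j = ∑ _j : Fin n, t := by
    have := hy.2.trans ht.2.symm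
    simp only [hc, Pi.one_apply, one_mul] at this
    exact_mod_cast this
  simp only [sub_sq, sum_add_distrib, sum_sub_distrib, ← sum_mul, ← mul_sum, hsum, sum_const,
    card_univ, Fintype.card_fin, nsmul_eq_mul]
  ring

theorem isMinNormOpt_const (hc : MILP.c G = 1) (ht : IsOptSol G fun _ => t) :
    IsMinNormOpt G fun _ => t := by
  refine ⟨ht, fun y hy => Real.sqrt_le_sqrt ?_⟩
  have := sum_sq_sub_const_of_isOptSol hc ht hy
  have : 0 ≤ ∑ j, (y j - t) ^ 2 := sum_nonneg fun j _ => sq_nonneg _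
  linarith

/-- With objective `∑ x_j`, all optimal solutions have the same coordinate sum, so a constant
optimal solution has strictly smaller norm than any other one. -/
theorem xstar_eq_const (hc : MILP.c G = 1) (ht : IsOptSol G fun _ => t) :
    xstar G = fun _ => t := by
  have hex : ∃ x, IsMinNormOpt G x := ⟨_, isMinNormOpt_const hc ht⟩
  have hx : IsMinNormOpt G (xstar G) := by
    rw [xstar, dif_pos hex]; exact hex.choose_spec
  have hle := (Real.sqrt_le_sqrt_iff (sum_nonneg fun j _ => sq_nonneg t)).1 (hx.2 _ ht)
  have hzero : ∑ j, (xstar G j - t) ^ 2 = 0 := by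
    have := sum_sq_sub_const_of_isOptSol hc ht hx.1
    have : 0 ≤ ∑ j, (xstar G j - t) ^ 2 := sum_nonneg fun j _ => sq_nonneg _
    linarith
  funext j
  rw [sum_eq_zero_iff_of_nonneg fun j _ => sq_nonneg _] at hzero
  exact sub_eq_zero.1 (pow_eq_zero_iff two_ne_zero |>.1 (hzero j (mem_univ j)))

end MinNorm

theorem branchDown_eq_of_xstar_eq_half {m n : ℕ} {G : MILP m n} {j : Fin n}
    (h : xstar G j = 1 / 2) : branchDown G j = lpValMod G j (MILP.lo G j) (Sum.inl 0) := by
  rw [branchDown, h, show ⌊(1 / 2 : ℝ)⌋ = 0 by norm_num [Int.floor_eq_zero_iff], Int.cast_zero]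

theorem branchUp_eq_of_xstar_eq_half {m n : ℕ} {G : MILP m n} {j : Fin n}
    (h : xstar G j = 1 / 2) : branchUp G j = lpValMod G j (Sum.inl 1) (MILP.hi G j) := by
  rw [branchUp, h, show ⌈(1 / 2 : ℝ)⌉ = 1 by norm_num [Int.ceil_eq_iff], Int.cast_one]

section VertexCover

variable {prs : Fin 8 → Fin 8 × Fin 8} {x : Fin 8 → ℝ}

theorem objective_mkInstance : ∑ j, MILP.c (mkInstance prs) j * x j = ∑ j, x j := by
  simp [MILP.c, mkInstance]

theorem lpVal_mkInstance_eq {S : Set (Fin 8 → ℝ)} {v : ℝ}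
    (h : IsLeast ((fun x => ∑ j, x j) '' S) v) : lpVal (MILP.c (mkInstance prs)) S = v :=
  lpVal_eq_of_isLeast (by simpa only [objective_mkInstance] using h)

theorem consSat_mkInstance_iff (hloop : ∀ i, (prs i).1 ≠ (prs i).2) :
    consSat (mkInstance prs) x ↔ ∀ i, 1 ≤ x (prs i).1 + x (prs i).2 := by
  refine forall_congr' fun i => ?_
  have hrow : ∑ j, MILP.A (mkInstance prs) i j * x j = x (prs i).1 + x (prs i).2 := by
    simp only [MILP.A, mkInstance, ite_mul, one_mul, zero_mul, ← sum_filter]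
    rw [← sum_pair (hloop i)]
    congr 1; ext j; simp
  rw [hrow]
  rfl

theorem mem_lpFeasSet_mkInstance_iff (hloop : ∀ i, (prs i).1 ≠ (prs i).2) :
    x ∈ lpFeasSet (mkInstance prs) ↔
      (∀ i, 1 ≤ x (prs i).1 + x (prs i).2) ∧ ∀ j, 0 ≤ x j ∧ x j ≤ 1 :=
  and_congr_left' (consSat_mkInstance_iff hloop)

theorem mem_feasSetMod_mkInstance_iff (hloop : ∀ i, (prs i).1 ≠ (prs i).2) {j : Fin 8}
    {lo' : ExtLo} {hi' : ExtHi} :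
    x ∈ feasSetMod (mkInstance prs) j lo' hi' ↔
      (∀ i, 1 ≤ x (prs i).1 + x (prs i).2) ∧ (∀ j' ≠ j, 0 ≤ x j' ∧ x j' ≤ 1) ∧
        loSat lo' (x j) ∧ hiSat hi' (x j) :=
  and_congr_left' (consSat_mkInstance_iff hloop)

end VertexCover

theorem cycPairs_loopless : ∀ i, (cycPairs i).1 ≠ (cycPairs i).2 := by decide

theorem triPairs_loopless : ∀ i, (triPairs i).1 ≠ (triPairs i).2 := by decide

theorem cycPairs_degree : ∀ j, #{i | j = (cycPairs i).1 ∨ j = (cycPairs i).2} = 2 := by decide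

theorem triPairs_degree : ∀ j, #{i | j = (triPairs i).1 ∨ j = (triPairs i).2} = 2 := by decide

theorem Gcyc_cover_constraints {x : Fin 8 → ℝ} (h : ∀ i, 1 ≤ x (cycPairs i).1 + x (cycPairs i).2) :
    1 ≤ x 0 + x 1 ∧ 1 ≤ x 1 + x 2 ∧ 1 ≤ x 2 + x 3 ∧ 1 ≤ x 3 + x 4 ∧
      1 ≤ x 4 + x 5 ∧ 1 ≤ x 5 + x 6 ∧ 1 ≤ x 6 + x 7 ∧ 1 ≤ x 7 + x 0 :=
  ⟨h 0, h 1, h 2, h 3, h 4, h 5, h 6, h 7⟩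

theorem Gtri_cover_constraints {x : Fin 8 → ℝ} (h : ∀ i, 1 ≤ x (triPairs i).1 + x (triPairs i).2) :
    1 ≤ x 0 + x 1 ∧ 1 ≤ x 1 + x 2 ∧ 1 ≤ x 2 + x 0 ∧ 1 ≤ x 3 + x 4 ∧
      1 ≤ x 4 + x 5 ∧ 1 ≤ x 5 + x 3 ∧ 1 ≤ x 6 + x 7 :=
  ⟨h 0, h 1, h 2, h 3, h 4, h 5, h 6⟩

theorem half_mem_lpFeasSet_Gcyc : (fun _ => 1 / 2) ∈ lpFeasSet Gcyc :=
  (mem_lpFeasSet_mkInstance_iff cycPairs_loopless).2 ⟨fun _ => by norm_num, fun _ => by norm_num⟩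

theorem half_mem_lpFeasSet_Gtri : (fun _ => 1 / 2) ∈ lpFeasSet Gtri :=
  (mem_lpFeasSet_mkInstance_iff triPairs_loopless).2 ⟨fun _ => by norm_num, fun _ => by norm_num⟩

theorem fstar_Gcyc : fstar Gcyc = (4 : ℝ) := by
  refine lpVal_mkInstance_eq ⟨⟨_, half_mem_lpFeasSet_Gcyc, by norm_num [Fin.sum_univ_eight]⟩, ?_⟩
  rintro _ ⟨x, hx, rfl⟩
  obtain ⟨h0, h1, h2, h3, h4, h5, h6, h7⟩ :=
    Gcyc_cover_constraints ((mem_lpFeasSet_mkInstance_iff cycPairs_loopless).1 hx).1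
  simp only [Fin.sum_univ_eight]
  linarith

theorem fstar_Gtri : fstar Gtri = (4 : ℝ) := by
  refine lpVal_mkInstance_eq ⟨⟨_, half_mem_lpFeasSet_Gtri, by norm_num [Fin.sum_univ_eight]⟩, ?_⟩
  rintro _ ⟨x, hx, rfl⟩
  obtain ⟨h0, h1, h2, h3, h4, h5, h6⟩ :=
    Gtri_cover_constraints ((mem_lpFeasSet_mkInstance_iff triPairs_loopless).1 hx).1
  simp only [Fin.sum_univ_eight]
  linarith

theorem xstar_Gcyc : xstar Gcyc = fun _ => 1 / 2 :=
  xstar_eq_const rfl ⟨half_mem_lpFeasSet_Gcyc, by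
    rw [fstar_Gcyc, Gcyc, objective_mkInstance, Fin.sum_univ_eight]; norm_num⟩

theorem xstar_Gtri : xstar Gtri = fun _ => 1 / 2 :=
  xstar_eq_const rfl ⟨half_mem_lpFeasSet_Gtri, by
    rw [fstar_Gtri, Gtri, objective_mkInstance, Fin.sum_univ_eight]; norm_num⟩

/-- The alternating cover `(0,1,0,1,0,1,0,1)` of the 8-cycle is optimal and has `x₀ = 0`. -/
theorem branchDown_Gcyc : branchDown Gcyc 0 = (4 : ℝ) := by
  rw [branchDown_eq_of_xstar_eq_half (congrFun xstar_Gcyc 0)]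
  refine lpVal_mkInstance_eq ⟨⟨![0, 1, 0, 1, 0, 1, 0, 1], ?_, ?_⟩, ?_⟩
  · refine (mem_feasSetMod_mkInstance_iff cycPairs_loopless).2 ⟨fun i => ?_, fun j _ => ?_, ?_, ?_⟩
    · fin_cases i <;> simp [cycPairs, Matrix.cons_val]
    · fin_cases j <;> simp [Matrix.cons_val]
    · simp [Gcyc, MILP.lo, mkInstance, loSat]
    · simp [hiSat]
  · simp [Fin.sum_univ_eight, Matrix.cons_val]; norm_num
  rintro _ ⟨x, hx, rfl⟩
  obtain ⟨h0, h1, h2, h3, h4, h5, h6, h7⟩ :=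
    Gcyc_cover_constraints ((mem_feasSetMod_mkInstance_iff cycPairs_loopless).1 hx).1
  simp only [Fin.sum_univ_eight]
  linarith

/-- Fixing `x₀ = 0` forces `x₁ = x₂ = 1`, while the second triangle and the 2-cycle still
cost `3/2 + 1`. -/
theorem branchDown_Gtri : branchDown Gtri 0 = (9 / 2 : ℝ) := by
  rw [branchDown_eq_of_xstar_eq_half (congrFun xstar_Gtri 0)]
  refine lpVal_mkInstance_eq ⟨⟨![0, 1, 1, 1 / 2, 1 / 2, 1 / 2, 1 / 2, 1 / 2], ?_, ?_⟩, ?_⟩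
  · refine (mem_feasSetMod_mkInstance_iff triPairs_loopless).2 ⟨fun i => ?_, fun j _ => ?_, ?_, ?_⟩
    · fin_cases i <;> simp [triPairs, Matrix.cons_val] <;> norm_num
    · fin_cases j <;> simp [Matrix.cons_val] <;> norm_num
    · simp [Gtri, MILP.lo, mkInstance, loSat]
    · simp [hiSat]
  · simp [Fin.sum_univ_eight, Matrix.cons_val]; norm_num
  rintro _ ⟨x, hx, rfl⟩
  obtain ⟨hcov, -, hlo, hhi⟩ := (mem_feasSetMod_mkInstance_iff triPairs_loopless).1 hx
  obtain ⟨h0, h1, h2, h3, h4, h5, h6⟩ := Gtri_cover_constraints hcov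
  have hx₀ : x 0 = 0 := le_antisymm (by simpa [hiSat] using hhi) hlo
  simp only [Fin.sum_univ_eight]
  linarith

theorem branchUp_Gtri : branchUp Gtri 0 = (9 / 2 : ℝ) := by
  rw [branchUp_eq_of_xstar_eq_half (congrFun xstar_Gtri 0)]
  refine lpVal_mkInstance_eq ⟨⟨![1, 1, 0, 1 / 2, 1 / 2, 1 / 2, 1 / 2, 1 / 2], ?_, ?_⟩, ?_⟩
  · refine (mem_feasSetMod_mkInstance_iff triPairs_loopless).2 ⟨fun i => ?_, fun j _ => ?_, ?_, ?_⟩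
    · fin_cases i <;> simp [triPairs, Matrix.cons_val] <;> norm_num
    · fin_cases j <;> simp [Matrix.cons_val] <;> norm_num
    · simp [loSat]
    · simp [Gtri, MILP.hi, mkInstance, hiSat]
  · simp [Fin.sum_univ_eight, Matrix.cons_val]; norm_num
  rintro _ ⟨x, hx, rfl⟩
  obtain ⟨hcov, -, hlo, -⟩ := (mem_feasSetMod_mkInstance_iff triPairs_loopless).1 hx
  obtain ⟨h0, h1, h2, h3, h4, h5, h6⟩ := Gtri_cover_constraints hcov
  have hx₀ : 1 ≤ x 0 := by simpa [loSat] using hlo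
  simp only [Fin.sum_univ_eight]
  linarith

theorem SB_Gcyc_zero : SB Gcyc 0 = 0 := by
  rw [SB, if_pos (show MILP.isInt Gcyc 0 = true from rfl), branchDown_Gcyc, fstar_Gcyc, sub_self,
    zero_mul]

theorem SB_Gtri_zero : SB Gtri 0 = 1 / 4 := by
  rw [SB, if_pos (show MILP.isInt Gtri 0 = true from rfl), branchDown_Gtri, branchUp_Gtri,
    fstar_Gtri]
  norm_num [EReal.toReal_coe]

/-- The two instances (3.1) and (3.2) have different strong branching
scores, yet every MP-GNN outputs the same vector on both. -/
theorem SB_differs_but_all_MPGNN_agree :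
    SB Gcyc ≠ SB Gtri ∧ ∀ F : MPGNN 8 8, MPGNN.eval F Gcyc = MPGNN.eval F Gtri := by
  refine ⟨fun h => ?_, fun F => MPGNN.eval_eq_of_isUniformBiregular
    (isUniformBiregular_mkInstance cycPairs_loopless cycPairs_degree)
    (isUniformBiregular_mkInstance triPairs_loopless triPairs_degree)⟩
  have h0 := congrFun h 0
  rw [SB_Gcyc_zero, SB_Gtri_zero] at h0
  norm_num at h0

end
end

section
/- There exist m,n ≥ 1, a Borel regular probability measure ℙ on the space 𝒢_{m,n} of MILP instances of size (m,n) with ℙ[SB(G) ∈ ℝ^n] = 1, and constants ε > 0 and δ > 0, such that every MP-GNN F of size (m,n) satisfies ℙ[‖F(G) − SB(G)‖ ≥ δ] ≥ ε, where ‖·‖ denotes the Euclidean norm on ℝ^n. -/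
open scoped BigOperators Classical
open MeasureTheory

noncomputable section

/-! ### Auxiliary material for the proof -/

section AuxProof

/-- A small forall-expansion for `Fin 6`. -/
lemma forall_fin_six' {P : Fin 6 → Prop} (h0 : P 0) (h1 : P 1) (h2 : P 2) (h3 : P 3)
    (h4 : P 4) (h5 : P 5) : ∀ i, P i := by
  intro i; fin_cases i <;> assumption

/-- Matrix of the 6-cycle instance. -/
def Aone : Fin 6 → Fin 6 → ℝ := fun i j => if j = i ∨ j = i + 1 then 1 else 0

/-- Matrix of the two-triangles instance. -/
def Atwo : Fin 6 → Fin 6 → ℝ := fun i j =>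
  if (i = 0 ∧ (j = 0 ∨ j = 1)) ∨ (i = 1 ∧ (j = 1 ∨ j = 2)) ∨ (i = 2 ∧ (j = 2 ∨ j = 0))
    ∨ (i = 3 ∧ (j = 3 ∨ j = 4)) ∨ (i = 4 ∧ (j = 4 ∨ j = 5)) ∨ (i = 5 ∧ (j = 5 ∨ j = 3))
  then 1 else 0

/-- The 6-cycle MILP instance. -/
def Gone : MILP 6 6 :=
  (Aone, fun _ => 1, fun _ => -1, fun _ => 0, fun _ => Sum.inl 0, fun _ => Sum.inl 1,
   fun _ => true)

/-- The two-triangles MILP instance. -/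
def Gtwo : MILP 6 6 :=
  (Atwo, fun _ => 1, fun _ => -1, fun _ => 0, fun _ => Sum.inl 0, fun _ => Sum.inl 1,
   fun _ => true)

def half6 : Fin 6 → ℝ := fun _ => 1/2

/-- Computing `lpVal` from a witness and a lower bound. -/
lemma lpVal_eq {n : ℕ} {c : Fin n → ℝ} {S : Set (Fin n → ℝ)} {r : ℝ} (x0 : Fin n → ℝ)
    (hx0 : x0 ∈ S) (hval : ∑ j, c j * x0 j = r)
    (hlb : ∀ x ∈ S, r ≤ ∑ j, c j * x j) : lpVal c S = (r : EReal) := by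
  apply le_antisymm
  · calc lpVal c S ≤ ((∑ j, c j * x0 j : ℝ) : EReal) := iInf₂_le x0 hx0
      _ = (r : EReal) := by rw [hval]
  · exact le_iInf₂ fun x hx => EReal.coe_le_coe_iff.mpr (hlb x hx)

end AuxProof
section AuxProof2

lemma half6_mem_Gone : half6 ∈ lpFeasSet Gone := by
  constructor
  · intro i
    fin_cases i <;>
      simp [consSat, senseRel, Gone, MILP.sense, MILP.A, MILP.b, Aone, Fin.sum_univ_six,
        half6] <;> norm_num
  · intro j
    refine ⟨?_, ?_⟩ <;> simp [Gone, MILP.lo, MILP.hi, loSat, hiSat, half6] <;> try norm_num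

lemma csum_eval (x : Fin 6 → ℝ) :
    ∑ j, MILP.c Gone j * x j = -(x 0 + x 1 + x 2 + x 3 + x 4 + x 5) := by
  simp [Gone, MILP.c, Fin.sum_univ_six]; try ring

lemma csum_eval' (x : Fin 6 → ℝ) :
    ∑ j, MILP.c Gtwo j * x j = -(x 0 + x 1 + x 2 + x 3 + x 4 + x 5) := by
  simp [Gtwo, MILP.c, Fin.sum_univ_six]; try ring

lemma cons_Gone {x : Fin 6 → ℝ} (h : consSat Gone x) :
    x 0 + x 1 ≤ 1 ∧ x 1 + x 2 ≤ 1 ∧ x 2 + x 3 ≤ 1 ∧ x 3 + x 4 ≤ 1 ∧ x 4 + x 5 ≤ 1 ∧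
      x 5 + x 0 ≤ 1 := by
  have h0 := h 0; have h1 := h 1; have h2 := h 2; have h3 := h 3; have h4 := h 4
  have h5 := h 5
  simp [senseRel, Gone, MILP.sense, MILP.A, MILP.b, Aone, Fin.sum_univ_six] at h0 h1 h2 h3 h4 h5
  exact ⟨by linarith, by linarith, by linarith, by linarith, by linarith, by linarith⟩

lemma cons_Gtwo {x : Fin 6 → ℝ} (h : consSat Gtwo x) :
    x 0 + x 1 ≤ 1 ∧ x 1 + x 2 ≤ 1 ∧ x 2 + x 0 ≤ 1 ∧ x 3 + x 4 ≤ 1 ∧ x 4 + x 5 ≤ 1 ∧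
      x 5 + x 3 ≤ 1 := by
  have h0 := h 0; have h1 := h 1; have h2 := h 2; have h3 := h 3; have h4 := h 4
  have h5 := h 5
  simp [senseRel, Gtwo, MILP.sense, MILP.A, MILP.b, Atwo, Fin.sum_univ_six] at h0 h1 h2 h3 h4 h5
  exact ⟨by linarith, by linarith, by linarith, by linarith, by linarith, by linarith⟩

lemma fstar_Gone : fstar Gone = ((-3 : ℝ) : EReal) := by
  apply lpVal_eq half6 half6_mem_Gone
  · rw [csum_eval]; norm_num [half6]
  · rintro x ⟨hc, -⟩
    obtain ⟨h0, h1, h2, h3, h4, h5⟩ := cons_Gone hc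
    rw [csum_eval]; linarith

end AuxProof2
section AuxProof3

lemma half6_mem_Gtwo : half6 ∈ lpFeasSet Gtwo := by
  constructor
  · intro i
    fin_cases i <;>
      simp [consSat, senseRel, Gtwo, MILP.sense, MILP.A, MILP.b, Atwo, Fin.sum_univ_six,
        half6] <;> norm_num
  · intro j
    refine ⟨?_, ?_⟩ <;> simp [Gtwo, MILP.lo, MILP.hi, loSat, hiSat, half6] <;> try norm_num

lemma fstar_Gtwo : fstar Gtwo = ((-3 : ℝ) : EReal) := by
  apply lpVal_eq half6 half6_mem_Gtwo
  · rw [csum_eval']; norm_num [half6]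
  · rintro x ⟨hc, -⟩
    obtain ⟨h0, h1, h2, h3, h4, h5⟩ := cons_Gtwo hc
    rw [csum_eval']; linarith

lemma opt_half6_Gone : IsOptSol Gone half6 := by
  refine ⟨half6_mem_Gone, ?_⟩
  rw [fstar_Gone, EReal.coe_eq_coe_iff, csum_eval]; norm_num [half6]

lemma opt_half6_Gtwo : IsOptSol Gtwo half6 := by
  refine ⟨half6_mem_Gtwo, ?_⟩
  rw [fstar_Gtwo, EReal.coe_eq_coe_iff, csum_eval']; norm_num [half6]

/-- Structure of optimal solutions of `Gone`: alternating `t, 1-t`. -/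
lemma opt_struct_Gone {y : Fin 6 → ℝ} (hy : IsOptSol Gone y) :
    y 1 = 1 - y 0 ∧ y 2 = y 0 ∧ y 3 = 1 - y 0 ∧ y 4 = y 0 ∧ y 5 = 1 - y 0 := by
  obtain ⟨⟨hc, -⟩, hval⟩ := hy
  rw [fstar_Gone, EReal.coe_eq_coe_iff, csum_eval] at hval
  obtain ⟨h0, h1, h2, h3, h4, h5⟩ := cons_Gone hc
  exact ⟨by linarith, by linarith, by linarith, by linarith, by linarith⟩

/-- `Gtwo` has a unique optimal solution. -/
lemma opt_struct_Gtwo {y : Fin 6 → ℝ} (hy : IsOptSol Gtwo y) : y = half6 := by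
  obtain ⟨⟨hc, -⟩, hval⟩ := hy
  rw [fstar_Gtwo, EReal.coe_eq_coe_iff, csum_eval'] at hval
  obtain ⟨h0, h1, h2, h3, h4, h5⟩ := cons_Gtwo hc
  funext k
  fin_cases k <;> simp [half6] <;> linarith

lemma sqrt_le_sqrt_rev {A B : ℝ} (hA : 0 ≤ A) (hB : 0 ≤ B)
    (h : Real.sqrt A ≤ Real.sqrt B) : A ≤ B := by
  calc A = Real.sqrt A ^ 2 := (Real.sq_sqrt hA).symm
    _ ≤ Real.sqrt B ^ 2 := by
        exact pow_le_pow_left₀ (Real.sqrt_nonneg A) h 2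
    _ = B := Real.sq_sqrt hB

lemma sumsq (y : Fin 6 → ℝ) :
    ∑ j, y j ^ 2 = y 0 ^ 2 + y 1 ^ 2 + y 2 ^ 2 + y 3 ^ 2 + y 4 ^ 2 + y 5 ^ 2 := by
  simp [Fin.sum_univ_six]

lemma isMinNorm_Gone : IsMinNormOpt Gone half6 := by
  refine ⟨opt_half6_Gone, fun y hy => ?_⟩
  obtain ⟨e1, e2, e3, e4, e5⟩ := opt_struct_Gone hy
  unfold euclNorm
  apply Real.sqrt_le_sqrt
  rw [sumsq, sumsq, e1, e2, e3, e4, e5]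
  norm_num [half6]
  nlinarith [sq_nonneg (2 * y 0 - 1)]

lemma isMinNorm_Gtwo : IsMinNormOpt Gtwo half6 := by
  refine ⟨opt_half6_Gtwo, fun y hy => ?_⟩
  rw [opt_struct_Gtwo hy]

lemma minNorm_Gone_unique {y : Fin 6 → ℝ} (hy : IsMinNormOpt Gone y) : y = half6 := by
  obtain ⟨e1, e2, e3, e4, e5⟩ := opt_struct_Gone hy.1
  have hn := hy.2 half6 opt_half6_Gone
  unfold euclNorm at hn
  have hsq : ∑ j, y j ^ 2 ≤ ∑ j, half6 j ^ 2 :=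
    sqrt_le_sqrt_rev (by positivity) (by positivity) hn
  rw [sumsq, sumsq, e1, e2, e3, e4, e5] at hsq
  have h0 : y 0 = 1/2 := by norm_num [half6] at hsq; nlinarith [sq_nonneg (2 * y 0 - 1)]
  funext k
  fin_cases k <;> simp [half6] <;> linarith

lemma xstar_Gone : xstar Gone = half6 := by
  have hex : ∃ x, IsMinNormOpt Gone x := ⟨half6, isMinNorm_Gone⟩
  unfold xstar
  rw [dif_pos hex]
  exact minNorm_Gone_unique hex.choose_spec

lemma xstar_Gtwo : xstar Gtwo = half6 := by
  have hex : ∃ x, IsMinNormOpt Gtwo x := ⟨half6, isMinNorm_Gtwo⟩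
  unfold xstar
  rw [dif_pos hex]
  exact opt_struct_Gtwo hex.choose_spec.1

end AuxProof3
section AuxProof4

/-- Witness vectors. -/
def wE : Fin 6 → ℝ := fun k => if k = 0 ∨ k = 2 ∨ k = 4 then 0 else 1
def wO : Fin 6 → ℝ := fun k => if k = 0 ∨ k = 2 ∨ k = 4 then 1 else 0
def v1 : Fin 6 → ℝ := fun k => if k = 1 then 1 else if k = 0 ∨ k = 2 then 0 else 1/2
def v2 : Fin 6 → ℝ := fun k => if k = 0 then 1 else if k = 1 ∨ k = 2 then 0 else 1/2
def v3 : Fin 6 → ℝ := fun k => if k = 2 then 1 else if k = 0 ∨ k = 1 then 0 else 1/2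
def v4 : Fin 6 → ℝ := fun k => if k = 4 then 1 else if k = 3 ∨ k = 5 then 0 else 1/2
def v5 : Fin 6 → ℝ := fun k => if k = 3 then 1 else if k = 4 ∨ k = 5 then 0 else 1/2
def v6 : Fin 6 → ℝ := fun k => if k = 5 then 1 else if k = 3 ∨ k = 4 then 0 else 1/2

lemma wE_cons : consSat Gone wE := by
  intro i
  fin_cases i <;>
    simp [senseRel, Gone, MILP.sense, MILP.A, MILP.b, Aone, Fin.sum_univ_six, wE] <;> norm_num

lemma wO_cons : consSat Gone wO := by
  intro i
  fin_cases i <;>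
    simp [senseRel, Gone, MILP.sense, MILP.A, MILP.b, Aone, Fin.sum_univ_six, wO] <;> norm_num

lemma v1_cons : consSat Gtwo v1 := by
  intro i
  fin_cases i <;>
    simp [senseRel, Gtwo, MILP.sense, MILP.A, MILP.b, Atwo, Fin.sum_univ_six, v1] <;> norm_num

lemma v2_cons : consSat Gtwo v2 := by
  intro i
  fin_cases i <;>
    simp [senseRel, Gtwo, MILP.sense, MILP.A, MILP.b, Atwo, Fin.sum_univ_six, v2] <;> norm_num

lemma v3_cons : consSat Gtwo v3 := by
  intro i
  fin_cases i <;>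
    simp [senseRel, Gtwo, MILP.sense, MILP.A, MILP.b, Atwo, Fin.sum_univ_six, v3] <;> norm_num

lemma v4_cons : consSat Gtwo v4 := by
  intro i
  fin_cases i <;>
    simp [senseRel, Gtwo, MILP.sense, MILP.A, MILP.b, Atwo, Fin.sum_univ_six, v4] <;> norm_num

lemma v5_cons : consSat Gtwo v5 := by
  intro i
  fin_cases i <;>
    simp [senseRel, Gtwo, MILP.sense, MILP.A, MILP.b, Atwo, Fin.sum_univ_six, v5] <;> norm_num

lemma v6_cons : consSat Gtwo v6 := by
  intro i
  fin_cases i <;>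
    simp [senseRel, Gtwo, MILP.sense, MILP.A, MILP.b, Atwo, Fin.sum_univ_six, v6] <;> norm_num

lemma wE_bnd : ∀ k, 0 ≤ wE k ∧ wE k ≤ 1 := by
  intro k; fin_cases k <;> simp [wE] <;> try norm_num
lemma wO_bnd : ∀ k, 0 ≤ wO k ∧ wO k ≤ 1 := by
  intro k; fin_cases k <;> simp [wO] <;> try norm_num
lemma v1_bnd : ∀ k, 0 ≤ v1 k ∧ v1 k ≤ 1 := by
  intro k; fin_cases k <;> simp [v1] <;> try norm_num
lemma v2_bnd : ∀ k, 0 ≤ v2 k ∧ v2 k ≤ 1 := by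
  intro k; fin_cases k <;> simp [v2] <;> try norm_num
lemma v3_bnd : ∀ k, 0 ≤ v3 k ∧ v3 k ≤ 1 := by
  intro k; fin_cases k <;> simp [v3] <;> try norm_num
lemma v4_bnd : ∀ k, 0 ≤ v4 k ∧ v4 k ≤ 1 := by
  intro k; fin_cases k <;> simp [v4] <;> try norm_num
lemma v5_bnd : ∀ k, 0 ≤ v5 k ∧ v5 k ≤ 1 := by
  intro k; fin_cases k <;> simp [v5] <;> try norm_num
lemma v6_bnd : ∀ k, 0 ≤ v6 k ∧ v6 k ≤ 1 := by
  intro k; fin_cases k <;> simp [v6] <;> try norm_num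

/-- Computing `lpVal` of a modified feasible set from a witness with bounds in `[0,1]`. -/
lemma lpVal_feasSetMod_eq (G : MILP 6 6) (hGlo : MILP.lo G = fun _ => Sum.inl (0:ℝ))
    (hGhi : MILP.hi G = fun _ => Sum.inl (1:ℝ)) (j : Fin 6) (lo' hi' : ℝ) (r : ℝ)
    (v : Fin 6 → ℝ) (hcons : consSat G v) (hbnd : ∀ k, 0 ≤ v k ∧ v k ≤ 1)
    (hlo : lo' ≤ v j) (hhi : v j ≤ hi')
    (hsum : ∑ k, MILP.c G k * v k = r)
    (hlb : ∀ x ∈ feasSetMod G j (Sum.inl lo') (Sum.inl hi'), r ≤ ∑ k, MILP.c G k * x k) :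
    lpVal (MILP.c G) (feasSetMod G j (Sum.inl lo') (Sum.inl hi')) = (r : EReal) := by
  refine lpVal_eq v ⟨hcons, fun k _ => ?_, hlo, hhi⟩ hsum hlb
  rw [hGlo, hGhi]
  exact hbnd k

lemma lb_mod_Gone (j : Fin 6) (lo' : ExtLo) (hi' : ExtHi) :
    ∀ x ∈ feasSetMod Gone j lo' hi', (-3:ℝ) ≤ ∑ k, MILP.c Gone k * x k := by
  rintro x ⟨hc, -, -, -⟩
  obtain ⟨h0, h1, h2, h3, h4, h5⟩ := cons_Gone hc
  rw [csum_eval]; linarith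

lemma fin6_cases (j : Fin 6) : j = 0 ∨ j = 1 ∨ j = 2 ∨ j = 3 ∨ j = 4 ∨ j = 5 := by
  fin_cases j <;> simp

lemma lb_down_Gtwo (j : Fin 6) :
    ∀ x ∈ feasSetMod Gtwo j (Sum.inl (0:ℝ)) (Sum.inl (0:ℝ)),
      (-(5/2) : ℝ) ≤ ∑ k, MILP.c Gtwo k * x k := by
  rintro x ⟨hc, hb, hlo, hhi⟩
  obtain ⟨h0, h1, h2, h3, h4, h5⟩ := cons_Gtwo hc
  have hxj : x j ≤ 0 := hhi
  rw [csum_eval']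
  rcases fin6_cases j with rfl | rfl | rfl | rfl | rfl | rfl <;> linarith

lemma lb_up_Gtwo (j : Fin 6) :
    ∀ x ∈ feasSetMod Gtwo j (Sum.inl (1:ℝ)) (Sum.inl (1:ℝ)),
      (-(5/2) : ℝ) ≤ ∑ k, MILP.c Gtwo k * x k := by
  rintro x ⟨hc, hb, hlo, hhi⟩
  obtain ⟨h0, h1, h2, h3, h4, h5⟩ := cons_Gtwo hc
  have hxj : x j ≤ 1 := hhi
  have hxj' : (1:ℝ) ≤ x j := hlo
  rw [csum_eval']
  rcases fin6_cases j with rfl | rfl | rfl | rfl | rfl | rfl <;> linarith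

end AuxProof4
section AuxProof5

lemma floor_half (j : Fin 6) : ((⌊half6 j⌋ : ℤ) : ℝ) = 0 := by norm_num [half6]

lemma ceil_half (j : Fin 6) : ((⌈half6 j⌉ : ℤ) : ℝ) = 1 := by norm_num [half6, Int.ceil_eq_iff]

lemma wE_sum : ∑ k, MILP.c Gone k * wE k = -3 := by
  rw [csum_eval]; simp [wE]; norm_num

lemma wO_sum : ∑ k, MILP.c Gone k * wO k = -3 := by
  rw [csum_eval]; simp [wO]; norm_num

lemma v1_sum : ∑ k, MILP.c Gtwo k * v1 k = -(5/2) := by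
  rw [csum_eval']; simp [v1]; norm_num
lemma v2_sum : ∑ k, MILP.c Gtwo k * v2 k = -(5/2) := by
  rw [csum_eval']; simp [v2]; norm_num
lemma v3_sum : ∑ k, MILP.c Gtwo k * v3 k = -(5/2) := by
  rw [csum_eval']; simp [v3]; norm_num
lemma v4_sum : ∑ k, MILP.c Gtwo k * v4 k = -(5/2) := by
  rw [csum_eval']; simp [v4]; norm_num
lemma v5_sum : ∑ k, MILP.c Gtwo k * v5 k = -(5/2) := by
  rw [csum_eval']; simp [v5]; norm_num
lemma v6_sum : ∑ k, MILP.c Gtwo k * v6 k = -(5/2) := by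
  rw [csum_eval']; simp [v6]; norm_num

lemma branchDown_Gone (j : Fin 6) : branchDown Gone j = ((-3 : ℝ) : EReal) := by
  unfold branchDown lpValMod
  rw [xstar_Gone, show (Sum.inl ((⌊half6 j⌋ : ℤ) : ℝ) : ExtLo) = Sum.inl ((0:ℝ)) from by
    rw [floor_half], show MILP.lo Gone j = Sum.inl (0:ℝ) from rfl]
  rcases fin6_cases j with rfl | rfl | rfl | rfl | rfl | rfl
  · exact lpVal_feasSetMod_eq Gone rfl rfl _ 0 0 (-3) wE wE_cons wE_bnd (by simp [wE])
      (by simp [wE]) wE_sum (lb_mod_Gone _ _ _)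
  · exact lpVal_feasSetMod_eq Gone rfl rfl _ 0 0 (-3) wO wO_cons wO_bnd (by simp [wO])
      (by simp [wO]) wO_sum (lb_mod_Gone _ _ _)
  · exact lpVal_feasSetMod_eq Gone rfl rfl _ 0 0 (-3) wE wE_cons wE_bnd (by simp [wE])
      (by simp [wE]) wE_sum (lb_mod_Gone _ _ _)
  · exact lpVal_feasSetMod_eq Gone rfl rfl _ 0 0 (-3) wO wO_cons wO_bnd (by simp [wO])
      (by simp [wO]) wO_sum (lb_mod_Gone _ _ _)
  · exact lpVal_feasSetMod_eq Gone rfl rfl _ 0 0 (-3) wE wE_cons wE_bnd (by simp [wE])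
      (by simp [wE]) wE_sum (lb_mod_Gone _ _ _)
  · exact lpVal_feasSetMod_eq Gone rfl rfl _ 0 0 (-3) wO wO_cons wO_bnd (by simp [wO])
      (by simp [wO]) wO_sum (lb_mod_Gone _ _ _)

lemma branchUp_Gone (j : Fin 6) : branchUp Gone j = ((-3 : ℝ) : EReal) := by
  unfold branchUp lpValMod
  rw [xstar_Gone, show (Sum.inl ((⌈half6 j⌉ : ℤ) : ℝ) : ExtLo) = Sum.inl ((1:ℝ)) from by
    rw [ceil_half], show MILP.hi Gone j = Sum.inl (1:ℝ) from rfl]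
  rcases fin6_cases j with rfl | rfl | rfl | rfl | rfl | rfl
  · exact lpVal_feasSetMod_eq Gone rfl rfl _ 1 1 (-3) wO wO_cons wO_bnd (by simp [wO])
      (by simp [wO]) wO_sum (lb_mod_Gone _ _ _)
  · exact lpVal_feasSetMod_eq Gone rfl rfl _ 1 1 (-3) wE wE_cons wE_bnd (by simp [wE])
      (by simp [wE]) wE_sum (lb_mod_Gone _ _ _)
  · exact lpVal_feasSetMod_eq Gone rfl rfl _ 1 1 (-3) wO wO_cons wO_bnd (by simp [wO])
      (by simp [wO]) wO_sum (lb_mod_Gone _ _ _)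
  · exact lpVal_feasSetMod_eq Gone rfl rfl _ 1 1 (-3) wE wE_cons wE_bnd (by simp [wE])
      (by simp [wE]) wE_sum (lb_mod_Gone _ _ _)
  · exact lpVal_feasSetMod_eq Gone rfl rfl _ 1 1 (-3) wO wO_cons wO_bnd (by simp [wO])
      (by simp [wO]) wO_sum (lb_mod_Gone _ _ _)
  · exact lpVal_feasSetMod_eq Gone rfl rfl _ 1 1 (-3) wE wE_cons wE_bnd (by simp [wE])
      (by simp [wE]) wE_sum (lb_mod_Gone _ _ _)

lemma branchDown_Gtwo (j : Fin 6) : branchDown Gtwo j = ((-(5/2) : ℝ) : EReal) := by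
  unfold branchDown lpValMod
  rw [xstar_Gtwo, show (Sum.inl ((⌊half6 j⌋ : ℤ) : ℝ) : ExtLo) = Sum.inl ((0:ℝ)) from by
    rw [floor_half], show MILP.lo Gtwo j = Sum.inl (0:ℝ) from rfl]
  rcases fin6_cases j with rfl | rfl | rfl | rfl | rfl | rfl
  · exact lpVal_feasSetMod_eq Gtwo rfl rfl _ 0 0 (-(5/2)) v1 v1_cons v1_bnd (by simp [v1])
      (by simp [v1]) v1_sum (lb_down_Gtwo _)
  · exact lpVal_feasSetMod_eq Gtwo rfl rfl _ 0 0 (-(5/2)) v2 v2_cons v2_bnd (by simp [v2])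
      (by simp [v2]) v2_sum (lb_down_Gtwo _)
  · exact lpVal_feasSetMod_eq Gtwo rfl rfl _ 0 0 (-(5/2)) v2 v2_cons v2_bnd (by simp [v2])
      (by simp [v2]) v2_sum (lb_down_Gtwo _)
  · exact lpVal_feasSetMod_eq Gtwo rfl rfl _ 0 0 (-(5/2)) v4 v4_cons v4_bnd (by simp [v4])
      (by simp [v4]) v4_sum (lb_down_Gtwo _)
  · exact lpVal_feasSetMod_eq Gtwo rfl rfl _ 0 0 (-(5/2)) v5 v5_cons v5_bnd (by simp [v5])
      (by simp [v5]) v5_sum (lb_down_Gtwo _)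
  · exact lpVal_feasSetMod_eq Gtwo rfl rfl _ 0 0 (-(5/2)) v5 v5_cons v5_bnd (by simp [v5])
      (by simp [v5]) v5_sum (lb_down_Gtwo _)

lemma branchUp_Gtwo (j : Fin 6) : branchUp Gtwo j = ((-(5/2) : ℝ) : EReal) := by
  unfold branchUp lpValMod
  rw [xstar_Gtwo, show (Sum.inl ((⌈half6 j⌉ : ℤ) : ℝ) : ExtLo) = Sum.inl ((1:ℝ)) from by
    rw [ceil_half], show MILP.hi Gtwo j = Sum.inl (1:ℝ) from rfl]
  rcases fin6_cases j with rfl | rfl | rfl | rfl | rfl | rfl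
  · exact lpVal_feasSetMod_eq Gtwo rfl rfl _ 1 1 (-(5/2)) v2 v2_cons v2_bnd (by simp [v2])
      (by simp [v2]) v2_sum (lb_up_Gtwo _)
  · exact lpVal_feasSetMod_eq Gtwo rfl rfl _ 1 1 (-(5/2)) v1 v1_cons v1_bnd (by simp [v1])
      (by simp [v1]) v1_sum (lb_up_Gtwo _)
  · exact lpVal_feasSetMod_eq Gtwo rfl rfl _ 1 1 (-(5/2)) v3 v3_cons v3_bnd (by simp [v3])
      (by simp [v3]) v3_sum (lb_up_Gtwo _)
  · exact lpVal_feasSetMod_eq Gtwo rfl rfl _ 1 1 (-(5/2)) v5 v5_cons v5_bnd (by simp [v5])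
      (by simp [v5]) v5_sum (lb_up_Gtwo _)
  · exact lpVal_feasSetMod_eq Gtwo rfl rfl _ 1 1 (-(5/2)) v4 v4_cons v4_bnd (by simp [v4])
      (by simp [v4]) v4_sum (lb_up_Gtwo _)
  · exact lpVal_feasSetMod_eq Gtwo rfl rfl _ 1 1 (-(5/2)) v6 v6_cons v6_bnd (by simp [v6])
      (by simp [v6]) v6_sum (lb_up_Gtwo _)

lemma SB_Gone : SB Gone = fun _ => 0 := by
  funext j
  unfold SB
  rw [branchDown_Gone, branchUp_Gone, fstar_Gone]
  simp

lemma SB_Gtwo : SB Gtwo = fun _ => 1/4 := by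
  funext j
  unfold SB
  rw [branchDown_Gtwo, branchUp_Gtwo, fstar_Gtwo]
  simp [show MILP.isInt Gtwo j = true from rfl]
  norm_num

lemma SBRealValued_Gone : SBRealValued Gone := by
  refine ⟨⟨half6, isMinNorm_Gone⟩, ?_, ?_, fun j _ => ?_⟩
  · rw [fstar_Gone]; exact EReal.coe_ne_top _
  · rw [fstar_Gone]; exact EReal.coe_ne_bot _
  · rw [branchDown_Gone, branchUp_Gone]
    exact ⟨EReal.coe_ne_top _, EReal.coe_ne_bot _, EReal.coe_ne_top _, EReal.coe_ne_bot _⟩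

lemma SBRealValued_Gtwo : SBRealValued Gtwo := by
  refine ⟨⟨half6, isMinNorm_Gtwo⟩, ?_, ?_, fun j _ => ?_⟩
  · rw [fstar_Gtwo]; exact EReal.coe_ne_top _
  · rw [fstar_Gtwo]; exact EReal.coe_ne_bot _
  · rw [branchDown_Gtwo, branchUp_Gtwo]
    exact ⟨EReal.coe_ne_top _, EReal.coe_ne_bot _, EReal.coe_ne_top _, EReal.coe_ne_bot _⟩

end AuxProof5
section AuxProof6

variable {E : Type*} [AddCommMonoid E]

lemma row_Aone (φ : ℝ → E) (hφ : φ 0 = 0) (i : Fin 6) :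
    ∑ j, φ (Aone i j) = φ 1 + φ 1 := by
  fin_cases i <;> simp [Aone, Fin.sum_univ_six, hφ]

lemma col_Aone (φ : ℝ → E) (hφ : φ 0 = 0) (j : Fin 6) :
    ∑ i, φ (Aone i j) = φ 1 + φ 1 := by
  fin_cases j <;> simp [Aone, Fin.sum_univ_six, hφ]

lemma row_Atwo (φ : ℝ → E) (hφ : φ 0 = 0) (i : Fin 6) :
    ∑ j, φ (Atwo i j) = φ 1 + φ 1 := by
  fin_cases i <;> simp [Atwo, Fin.sum_univ_six, hφ]

lemma col_Atwo (φ : ℝ → E) (hφ : φ 0 = 0) (j : Fin 6) :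
    ∑ i, φ (Atwo i j) = φ 1 + φ 1 := by
  fin_cases j <;> simp [Atwo, Fin.sum_univ_six, hφ]

/-- All MP-GNN features are constant across nodes and agree on `Gone` and `Gtwo`. -/
lemma st_const (F : MPGNN 6 6) : ∀ l : ℕ, ∃ (s t : Fin (F.d l) → ℝ),
    (∀ i, (MPGNN.st F Gone l).1 i = s ∧ (MPGNN.st F Gtwo l).1 i = s) ∧
    (∀ j, (MPGNN.st F Gone l).2 j = t ∧ (MPGNN.st F Gtwo l).2 j = t) := by
  intro l
  induction l with
  | zero =>
      exact ⟨F.p0 (1, 0), F.q0 (-1, Sum.inl 0, Sum.inl 1, true),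
        fun i => ⟨rfl, rfl⟩, fun j => ⟨rfl, rfl⟩⟩
  | succ l ih =>
      obtain ⟨s, t, hs, ht⟩ := ih
      refine ⟨F.p l (s, F.f l (t, 1) + F.f l (t, 1)), F.q l (t, F.g l (s, 1) + F.g l (s, 1)),
        fun i => ⟨?_, ?_⟩, fun j => ⟨?_, ?_⟩⟩
      · show F.p l ((MPGNN.st F Gone l).1 i,
          ∑ j, F.f l ((MPGNN.st F Gone l).2 j, Aone i j)) = _
        rw [(hs i).1, Finset.sum_congr rfl (fun j _ => by rw [(ht j).1]),
          row_Aone (fun a => F.f l (t, a)) (F.f_zero l t) i]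
      · show F.p l ((MPGNN.st F Gtwo l).1 i,
          ∑ j, F.f l ((MPGNN.st F Gtwo l).2 j, Atwo i j)) = _
        rw [(hs i).2, Finset.sum_congr rfl (fun j _ => by rw [(ht j).2]),
          row_Atwo (fun a => F.f l (t, a)) (F.f_zero l t) i]
      · show F.q l ((MPGNN.st F Gone l).2 j,
          ∑ i, F.g l ((MPGNN.st F Gone l).1 i, Aone i j)) = _
        rw [(ht j).1, Finset.sum_congr rfl (fun i _ => by rw [(hs i).1]),
          col_Aone (fun a => F.g l (s, a)) (F.g_zero l s) j]
      · show F.q l ((MPGNN.st F Gtwo l).2 j,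
          ∑ i, F.g l ((MPGNN.st F Gtwo l).1 i, Atwo i j)) = _
        rw [(ht j).2, Finset.sum_congr rfl (fun i _ => by rw [(hs i).2]),
          col_Atwo (fun a => F.g l (s, a)) (F.g_zero l s) j]

/-- Every MP-GNN outputs the same thing on `Gone` and `Gtwo`. -/
lemma eval_eq (F : MPGNN 6 6) : MPGNN.eval F Gone = MPGNN.eval F Gtwo := by
  obtain ⟨s, t, hs, ht⟩ := st_const F F.L
  funext j
  unfold MPGNN.eval
  rw [Finset.sum_congr rfl (fun i _ => (hs i).1),
      Finset.sum_congr rfl (fun i _ => (hs i).2),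
      Finset.sum_congr rfl (fun j' _ => (ht j').1),
      Finset.sum_congr rfl (fun j' _ => (ht j').2),
      (ht j).1, (ht j).2]

end AuxProof6
section AuxProof7

/-! Euclidean distance facts. -/

lemma euclNorm_eq_norm {n : ℕ} (x : Fin n → ℝ) :
    euclNorm x = ‖(WithLp.equiv 2 (Fin n → ℝ)).symm x‖ := by
  rw [EuclideanSpace.norm_eq]
  unfold euclNorm
  congr 1
  exact Finset.sum_congr rfl fun j _ => by
    rw [show ((WithLp.equiv 2 (Fin n → ℝ)).symm x).ofLp j = x j from rfl, Real.norm_eq_abs, sq_abs]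

lemma euclDist_eq_dist {n : ℕ} (x y : Fin n → ℝ) :
    euclDist x y
      = dist ((WithLp.equiv 2 (Fin n → ℝ)).symm x) ((WithLp.equiv 2 (Fin n → ℝ)).symm y) := by
  rw [dist_eq_norm]
  unfold euclDist
  rw [euclNorm_eq_norm]
  congr 1

/-! Measurability instances. -/

instance : MeasurableSingletonClass (ℝ ⊕ Unit) := by
  constructor
  rintro (a | a) <;> rw [measurableSet_sum_iff] <;> constructor
  · convert MeasurableSet.singleton a using 1; ext x; simp
  · convert MeasurableSet.empty using 1; ext x; simp
  · convert MeasurableSet.empty using 1; ext x; simp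
  · convert MeasurableSet.univ using 1; ext x; simp

instance inst1 : MeasurableSingletonClass ((Fin 6 → ℝ ⊕ Unit) × (Fin 6 → Bool)) :=
  inferInstance
instance inst2 :
    MeasurableSingletonClass ((Fin 6 → ℝ ⊕ Unit) × (Fin 6 → ℝ ⊕ Unit) × (Fin 6 → Bool)) :=
  inferInstance
instance inst3 : MeasurableSingletonClass
    ((Fin 6 → Fin 3) × (Fin 6 → ℝ ⊕ Unit) × (Fin 6 → ℝ ⊕ Unit) × (Fin 6 → Bool)) :=
  inferInstance
instance inst4 : MeasurableSingletonClass ((Fin 6 → ℝ) × (Fin 6 → Fin 3) ×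
    (Fin 6 → ℝ ⊕ Unit) × (Fin 6 → ℝ ⊕ Unit) × (Fin 6 → Bool)) :=
  inferInstance
instance inst5 : MeasurableSingletonClass ((Fin 6 → ℝ) × (Fin 6 → ℝ) × (Fin 6 → Fin 3) ×
    (Fin 6 → ℝ ⊕ Unit) × (Fin 6 → ℝ ⊕ Unit) × (Fin 6 → Bool)) :=
  inferInstance
instance inst6 : MeasurableSingletonClass ((Fin 6 → Fin 6 → ℝ) × (Fin 6 → ℝ) × (Fin 6 → ℝ) ×
    (Fin 6 → Fin 3) × (Fin 6 → ℝ ⊕ Unit) × (Fin 6 → ℝ ⊕ Unit) × (Fin 6 → Bool)) :=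
  inferInstance

/-! The two-point measure. -/

lemma mu_apply {α : Type*} [MeasurableSpace α] [MeasurableSingletonClass α] (a b : α)
    (s : Set α) :
    ((2:ENNReal)⁻¹ • (MeasureTheory.Measure.dirac a + MeasureTheory.Measure.dirac b)) s
      = 2⁻¹ * (s.indicator 1 a + s.indicator 1 b) := by
  simp [MeasureTheory.Measure.dirac_apply, mul_add]

lemma regular_aux {α : Type*} [MeasurableSpace α] [TopologicalSpace α] [T1Space α]
    [MeasurableSingletonClass α] (a b : α) :
    ((2:ENNReal)⁻¹ • (MeasureTheory.Measure.dirac a + MeasureTheory.Measure.dirac b)).Regular := by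
  set μ : Measure α := (2:ENNReal)⁻¹ • (MeasureTheory.Measure.dirac a
    + MeasureTheory.Measure.dirac b) with hμ
  have key : ∀ s t : Set α, (a ∈ s ↔ a ∈ t) → (b ∈ s ↔ b ∈ t) → μ s = μ t := by
    intro s t hsa hsb
    rw [hμ, mu_apply, mu_apply, Set.indicator_apply, Set.indicator_apply, Set.indicator_apply,
      Set.indicator_apply, if_congr hsa rfl rfl, if_congr hsb rfl rfl]
  have huniv : μ Set.univ = 1 := by
    rw [hμ, mu_apply]
    simp
    rw [one_add_one_eq_two, ENNReal.inv_mul_cancel two_ne_zero ENNReal.ofNat_ne_top]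
  have habfin : ({a, b} : Set α).Finite := (Set.finite_singleton b).insert a
  have hfc : MeasureTheory.IsFiniteMeasureOnCompacts μ :=
    ⟨fun K _ => lt_of_le_of_lt (measure_mono (Set.subset_univ K))
      (by rw [huniv]; exact ENNReal.one_lt_top)⟩
  refine { toIsFiniteMeasureOnCompacts := hfc, toOuterRegular := ⟨?_⟩, innerRegular := ?_ }
  · intro A hA r hr
    refine ⟨(({a, b} : Set α) \ A)ᶜ, fun x hx => by simp [hx], ?_, ?_⟩
    · rw [isOpen_compl_iff]
      exact (habfin.diff).isClosed
    · have : μ ((({a, b} : Set α) \ A)ᶜ) = μ A := by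
        apply key <;> by_cases h : a ∈ A <;> by_cases h' : b ∈ A <;> simp [h, h']
      rw [this]; exact hr
  · intro U _ r hr
    refine ⟨({a, b} : Set α) ∩ U, Set.inter_subset_right, (habfin.inter_of_left U).isCompact, ?_⟩
    have : μ (({a, b} : Set α) ∩ U) = μ U := by
      apply key <;> simp
    rw [this]; exact hr

end AuxProof7
/-- There is a Borel regular probability distribution of MILP instances,
supported on instances with real-valued SB scores, together with tolerances `ε, δ > 0`,
on which every MP-GNN fails to approximate the strong branching scores. -/
theorem exists_distribution_where_all_MPGNN_fail :
    ∃ (m n : ℕ), 1 ≤ m ∧ 1 ≤ n ∧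
      ∃ μ : Measure (MILP m n), IsProbabilityMeasure μ ∧ μ.Regular ∧
        μ {G | SBRealValued G} = 1 ∧
        ∃ ε δ : ℝ, 0 < ε ∧ 0 < δ ∧
          ∀ F : MPGNN m n,
            ENNReal.ofReal ε ≤ μ {G | δ ≤ euclDist (MPGNN.eval F G) (SB G)} := by
  refine ⟨6, 6, by norm_num, by norm_num,
    (2:ENNReal)⁻¹ • (Measure.dirac Gone + Measure.dirac Gtwo), ?_, regular_aux Gone Gtwo, ?_,
    1/2, euclDist (SB Gone) (SB Gtwo) / 2, by norm_num, ?_, ?_⟩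
  · constructor
    rw [mu_apply]
    simp only [Set.indicator_univ, Pi.one_apply]
    rw [one_add_one_eq_two, ENNReal.inv_mul_cancel two_ne_zero ENNReal.ofNat_ne_top]
  · have hm1 : Gone ∈ {G : MILP 6 6 | SBRealValued G} := SBRealValued_Gone
    have hm2 : Gtwo ∈ {G : MILP 6 6 | SBRealValued G} := SBRealValued_Gtwo
    rw [mu_apply, Set.indicator_of_mem hm1, Set.indicator_of_mem hm2]
    simp only [Pi.one_apply]
    rw [one_add_one_eq_two, ENNReal.inv_mul_cancel two_ne_zero ENNReal.ofNat_ne_top]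
  · have hd : euclDist (SB Gone) (SB Gtwo) = Real.sqrt (3/8) := by
      rw [SB_Gone, SB_Gtwo]
      unfold euclDist euclNorm
      norm_num [Fin.sum_univ_six]
    rw [hd]
    positivity
  · intro F
    have hEq := eval_eq F
    have htri : euclDist (SB Gone) (SB Gtwo) ≤
        euclDist (MPGNN.eval F Gone) (SB Gone) + euclDist (MPGNN.eval F Gtwo) (SB Gtwo) := by
      rw [← hEq, euclDist_eq_dist, euclDist_eq_dist, euclDist_eq_dist,
        dist_comm ((WithLp.equiv 2 (Fin 6 → ℝ)).symm (MPGNN.eval F Gone))]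
      exact dist_triangle _ _ _
    have hhalf : ENNReal.ofReal (1/2) = (2:ENNReal)⁻¹ := by
      rw [show (1/2:ℝ) = (2:ℝ)⁻¹ by norm_num,
        ENNReal.ofReal_inv_of_pos (by norm_num : (0:ℝ) < 2), ENNReal.ofReal_ofNat]
    have hor : euclDist (SB Gone) (SB Gtwo) / 2 ≤ euclDist (MPGNN.eval F Gone) (SB Gone) ∨
        euclDist (SB Gone) (SB Gtwo) / 2 ≤ euclDist (MPGNN.eval F Gtwo) (SB Gtwo) := by
      by_contra h
      push_neg at h
      obtain ⟨h1, h2⟩ := h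
      linarith
    rw [hhalf, mu_apply]
    rcases hor with h | h
    · have hm : Gone ∈ {G : MILP 6 6 |
          euclDist (SB Gone) (SB Gtwo) / 2 ≤ euclDist (MPGNN.eval F G) (SB G)} := h
      rw [Set.indicator_of_mem hm]
      simp only [Pi.one_apply]
      exact le_trans (le_of_eq (mul_one _).symm) (mul_le_mul_right le_self_add _)
    · have hm : Gtwo ∈ {G : MILP 6 6 |
          euclDist (SB Gone) (SB Gtwo) / 2 ≤ euclDist (MPGNN.eval F G) (SB G)} := h
      rw [Set.indicator_of_mem hm]
      simp only [Pi.one_apply]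
      exact le_trans (le_of_eq (mul_one _).symm) (mul_le_mul_right le_add_self _)
end
end

section
/- Let G and Ḡ be MILP instances of size (m,n), both MP-tractable, with SB(G) ∈ ℝ^n and SB(Ḡ) ∈ ℝ^n. If G ∼^W Ḡ, then SB(G) = SB(Ḡ). -/
open scoped BigOperators Classical
open MeasureTheory

noncomputable section

section SBProofAux

/-- Two tuples with equal multisets of values differ by a permutation of the index set. -/
lemma exists_perm_of_map_univ_eq {α β : Type*} [Fintype α] (f g : α → β)
    (h : Finset.univ.val.map f = Finset.univ.val.map g) :
    ∃ σ : Equiv.Perm α, ∀ a, f a = g (σ a) := by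
  classical
  have hcard : ∀ b, Fintype.card {a // f a = b} = Fintype.card {a // g a = b} := by
    intro b
    have hc := congrArg (Multiset.count b) h
    rw [Multiset.count_map, Multiset.count_map] at hc
    have e : ∀ (h' : α → β), (Finset.univ.filter fun a => h' a = b).card
        = Multiset.card (Finset.univ.val.filter fun a => b = h' a) := by
      intro h'
      rw [Finset.card, Finset.filter_val]
      congr 1
      exact Multiset.filter_congr (fun x _ => eq_comm)
    rw [Fintype.card_subtype, Fintype.card_subtype, e f, e g, hc]
  let e : ∀ b, {a // f a = b} ≃ {a // g a = b} := fun b => Fintype.equivOfCardEq (hcard b)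
  exact ⟨Equiv.ofFiberEquiv e, fun a => (Equiv.ofFiberEquiv_map e a).symm⟩

variable {m n : ℕ}

/-- WL colors refine: equality at a later round implies equality at an earlier round. -/
lemma wlV_down (G H : MILP m n) :
    ∀ l' l, l ≤ l' → ∀ (i i' : Fin m),
      (wl G l').1 i = (wl H l').1 i' → (wl G l).1 i = (wl H l).1 i'
  | 0, l, hl, i, i', hcol => by
      obtain rfl := Nat.le_zero.mp hl; exact hcol
  | l' + 1, l, hl, i, i', hcol => by
      rcases Nat.eq_or_lt_of_le hl with rfl | hlt
      · exact hcol
      · exact wlV_down G H l' l (Nat.lt_succ_iff.mp hlt) i i' (congrArg Prod.fst hcol)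

lemma wlW_down (G H : MILP m n) :
    ∀ l' l, l ≤ l' → ∀ (j j' : Fin n),
      (wl G l').2 j = (wl H l').2 j' → (wl G l).2 j = (wl H l).2 j'
  | 0, l, hl, j, j', hcol => by
      obtain rfl := Nat.le_zero.mp hl; exact hcol
  | l' + 1, l, hl, j, j', hcol => by
      rcases Nat.eq_or_lt_of_le hl with rfl | hlt
      · exact hcol
      · exact wlW_down G H l' l (Nat.lt_succ_iff.mp hlt) j j' (congrArg Prod.fst hcol)

lemma wlV_snd (G : MILP m n) (l : ℕ) (i : Fin m) :
    ((wl G (l + 1)).1 i).2 = (Finset.univ.filter (fun j => MILP.A G i j ≠ 0)).val.map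
      (fun j => ((wl G l).2 j, MILP.A G i j)) := rfl

end SBProofAux

/-- Two MP-tractable MILP instances with real-valued SB scores that are
indistinguishable by the WL test (in the sense `G ∼^W Ḡ`) have equal SB scores. -/
theorem SB_eq_of_WLEquivW_of_MPTractable
    {m n : ℕ} (G H : MILP m n)
    (hG : MPTractable G) (hH : MPTractable H)
    (hSBG : SBRealValued G) (hSBH : SBRealValued H)
    (h : WLEquivW G H) :
    SB G = SB H := by
  classical
  -- pointwise equality of variable colors
  have hW : ∀ l j, (wl G l).2 j = (wl H l).2 j := fun l j => (h l).2 j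
  -- a single permutation matching constraint colors at all rounds
  set S : ℕ → Finset (Equiv.Perm (Fin m)) :=
    fun l => Finset.univ.filter (fun σ => ∀ i, (wl G l).1 i = (wl H l).1 (σ i)) with hS
  have hSne : ∀ l, (S l).Nonempty := by
    intro l
    obtain ⟨σ, hσ⟩ := exists_perm_of_map_univ_eq ((wl G l).1) ((wl H l).1) (h l).1
    exact ⟨σ, Finset.mem_filter.mpr ⟨Finset.mem_univ _, hσ⟩⟩
  have hSsub : ∀ l l', l ≤ l' → S l' ⊆ S l := by
    intro l l' hll σ hσ
    rcases Finset.mem_filter.mp hσ with ⟨-, hσ2⟩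
    exact Finset.mem_filter.mpr
      ⟨Finset.mem_univ _, fun i => wlV_down G H l' l hll i (σ i) (hσ2 i)⟩
  obtain ⟨L, hL⟩ : ∃ L, ∀ l, (S L).card ≤ (S l).card := by
    have hne : (Set.range fun l => (S l).card).Nonempty := ⟨_, ⟨0, rfl⟩⟩
    obtain ⟨L, hLk⟩ := Nat.sInf_mem hne
    refine ⟨L, fun l => ?_⟩
    have h1 : (S L).card = sInf (Set.range fun l => (S l).card) := hLk
    rw [h1]
    exact Nat.sInf_le ⟨l, rfl⟩
  obtain ⟨σ, hσL⟩ := hSne L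
  have hσ : ∀ l i, (wl G l).1 i = (wl H l).1 (σ i) := by
    intro l
    have hmem : σ ∈ S l := by
      rcases le_total l L with hle | hle
      · exact hSsub l L hle hσL
      · have heq := Finset.eq_of_subset_of_card_le (hSsub L l hle) (hL l)
        rw [heq]; exact hσL
    exact (Finset.mem_filter.mp hmem).2
  -- a round after which variable colors are stable
  set L' : ℕ := Finset.univ.sup (fun p : Fin n × Fin n =>
    if hp : ∃ l, (wl G l).2 p.1 ≠ (wl G l).2 p.2 then Nat.find hp else 0) with hL'
  have hsep : ∀ j1 j2 : Fin n, (wl G L').2 j1 = (wl G L').2 j2 →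
      ∀ l, (wl G l).2 j1 = (wl G l).2 j2 := by
    intro j1 j2 heq l
    by_contra hne
    have hex : ∃ l, (wl G l).2 j1 ≠ (wl G l).2 j2 := ⟨l, hne⟩
    have hle : Nat.find hex ≤ L' := by
      have hle0 := Finset.le_sup (b := (j1, j2)) (f := fun p : Fin n × Fin n =>
        if hp : ∃ l, (wl G l).2 p.1 ≠ (wl G l).2 p.2 then Nat.find hp else 0)
        (Finset.mem_univ _)
      simp only [dif_pos hex] at hle0
      rw [hL']; exact hle0
    exact Nat.find_spec hex (wlW_down G G L' (Nat.find hex) hle j1 j2 heq)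
  -- the matrices agree up to the permutation σ of the rows
  have hA : ∀ i j, MILP.A H (σ i) j = MILP.A G i j := by
    intro i j
    have hmul : (Finset.univ.filter (fun j' => MILP.A G i j' ≠ 0)).val.map
          (fun j' => ((wl G L').2 j', MILP.A G i j'))
        = (Finset.univ.filter (fun j' => MILP.A H (σ i) j' ≠ 0)).val.map
          (fun j' => ((wl H L').2 j', MILP.A H (σ i) j')) := by
      have hc := congrArg Prod.snd (hσ (L' + 1) i)
      rwa [wlV_snd, wlV_snd] at hc
    by_cases ha : MILP.A G i j = 0
    · by_cases hb : MILP.A H (σ i) j = 0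
      · rw [ha, hb]
      · exfalso
        have hmem : ((wl H L').2 j, MILP.A H (σ i) j) ∈
            (Finset.univ.filter (fun j' => MILP.A H (σ i) j' ≠ 0)).val.map
              (fun j' => ((wl H L').2 j', MILP.A H (σ i) j')) :=
          Multiset.mem_map.mpr
            ⟨j, Finset.mem_val.mpr (Finset.mem_filter.mpr ⟨Finset.mem_univ _, hb⟩), rfl⟩
        rw [← hmul] at hmem
        obtain ⟨j2, hj2mem, hj2eq⟩ := Multiset.mem_map.mp hmem
        have h1 : (wl G L').2 j2 = (wl H L').2 j := congrArg Prod.fst hj2eq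
        have h3 : MILP.A G i j2 ≠ 0 := (Finset.mem_filter.mp (Finset.mem_val.mp hj2mem)).2
        have h4 : ∀ l, (wl G l).2 j2 = (wl G l).2 j :=
          hsep j2 j (h1.trans (hW L' j).symm)
        have h5 : MILP.A G i j2 = MILP.A G i j := hG i i j2 j (fun _ => rfl) h4
        exact h3 (h5.trans ha)
    · have hmem : ((wl G L').2 j, MILP.A G i j) ∈
          (Finset.univ.filter (fun j' => MILP.A G i j' ≠ 0)).val.map
            (fun j' => ((wl G L').2 j', MILP.A G i j')) :=
        Multiset.mem_map.mpr
          ⟨j, Finset.mem_val.mpr (Finset.mem_filter.mpr ⟨Finset.mem_univ _, ha⟩), rfl⟩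
      rw [hmul] at hmem
      obtain ⟨j2, hj2mem, hj2eq⟩ := Multiset.mem_map.mp hmem
      have h1 : (wl H L').2 j2 = (wl G L').2 j := congrArg Prod.fst hj2eq
      have h2 : MILP.A H (σ i) j2 = MILP.A G i j := congrArg Prod.snd hj2eq
      have h4 : ∀ l, (wl G l).2 j2 = (wl G l).2 j := hsep j2 j ((hW L' j2).trans h1)
      have h5 : ∀ l, (wl H l).2 j2 = (wl H l).2 j :=
        fun l => (hW l j2).symm.trans ((h4 l).trans (hW l j))
      have h6 : MILP.A H (σ i) j2 = MILP.A H (σ i) j := hH (σ i) (σ i) j2 j (fun _ => rfl) h5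
      rw [← h6, h2]
  -- right-hand side data agree
  have hbs : ∀ i, MILP.b H (σ i) = MILP.b G i ∧ MILP.sense H (σ i) = MILP.sense G i := by
    intro i
    have h0 := hσ 0 i
    exact ⟨(congrArg Prod.fst h0).symm, (congrArg Prod.snd h0).symm⟩
  have hcG : MILP.c H = MILP.c G := funext fun j => (congrArg Prod.fst (hW 0 j)).symm
  have hlo : MILP.lo H = MILP.lo G :=
    funext fun j => (congrArg (fun x : WColor 0 => x.2.1) (hW 0 j)).symm
  have hhi : MILP.hi H = MILP.hi G :=
    funext fun j => (congrArg (fun x : WColor 0 => x.2.2.1) (hW 0 j)).symm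
  have hInt : MILP.isInt H = MILP.isInt G :=
    funext fun j => (congrArg (fun x : WColor 0 => x.2.2.2) (hW 0 j)).symm
  -- the two LP relaxations have the same feasible sets
  have hcons : ∀ x, consSat H x ↔ consSat G x := by
    intro x
    constructor
    · intro hx i
      have hk := hx (σ i)
      have e3 : (∑ j, MILP.A H (σ i) j * x j) = ∑ j, MILP.A G i j * x j :=
        Finset.sum_congr rfl fun j _ => by rw [hA]
      rwa [(hbs i).1, (hbs i).2, e3] at hk
    · intro hx i
      have hk := hx (σ.symm i)
      have e1 : MILP.sense G (σ.symm i) = MILP.sense H i := by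
        have := (hbs (σ.symm i)).2; rw [σ.apply_symm_apply] at this; exact this.symm
      have e2 : MILP.b G (σ.symm i) = MILP.b H i := by
        have := (hbs (σ.symm i)).1; rw [σ.apply_symm_apply] at this; exact this.symm
      have e3 : (∑ j, MILP.A G (σ.symm i) j * x j) = ∑ j, MILP.A H i j * x j :=
        Finset.sum_congr rfl fun j _ => by
          have := hA (σ.symm i) j; rw [σ.apply_symm_apply] at this; rw [this]
      rwa [e1, e2, e3] at hk
  have hfeas : lpFeasSet H = lpFeasSet G := by
    ext x
    simp only [lpFeasSet, Set.mem_setOf_eq, hcons x, hlo, hhi]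
  have hmod : ∀ (j : Fin n) (lo' : ExtLo) (hi' : ExtHi),
      feasSetMod H j lo' hi' = feasSetMod G j lo' hi' := by
    intro j lo' hi'
    ext x
    simp only [feasSetMod, Set.mem_setOf_eq, hcons x, hlo, hhi]
  have hfstar : fstar H = fstar G := by
    unfold fstar; rw [hcG, hfeas]
  have hlpmod : ∀ (j : Fin n) (lo' : ExtLo) (hi' : ExtHi),
      lpValMod H j lo' hi' = lpValMod G j lo' hi' := by
    intro j lo' hi'
    unfold lpValMod; rw [hcG, hmod]
  have hopt : IsOptSol H = IsOptSol G := by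
    funext x; unfold IsOptSol; rw [hfeas, hcG, hfstar]
  have hmin : IsMinNormOpt H = IsMinNormOpt G := by
    funext x; unfold IsMinNormOpt; rw [hopt]
  have hxs : xstar H = xstar G := by
    unfold xstar; rw [hmin]
  have hbd : ∀ j, branchDown H j = branchDown G j := by
    intro j; unfold branchDown; rw [hlo, hxs, hlpmod]
  have hbu : ∀ j, branchUp H j = branchUp G j := by
    intro j; unfold branchUp; rw [hhi, hxs, hlpmod]
  funext j
  unfold SB
  rw [hInt, hbd j, hbu j, hfstar]
end
end

section
/- Let G be an MP-tractable MILP instance of size (m,n) with SB(G) ∈ ℝ^n, and let j_1, j_2 ∈ {1,…,n}. If C_l^W(j_1) = C_l^W(j_2) for every l ≥ 0, then SB(G)_{j_1} = SB(G)_{j_2}. -/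
open scoped BigOperators Classical
open MeasureTheory

noncomputable section

section AuxSB

variable {m n : ℕ}

lemma swap_eval {α : Type*} [DecidableEq α] {β : Type*} (F : α → β) (a b : α)
    (hF : F a = F b) (x : α) : F (Equiv.swap a b x) = F x := by
  rcases eq_or_ne x a with rfl | hxa
  · rw [Equiv.swap_apply_left]; exact hF.symm
  rcases eq_or_ne x b with rfl | hxb
  · rw [Equiv.swap_apply_right]; exact hF
  · rw [Equiv.swap_apply_of_ne_of_ne hxa hxb]

lemma sum_swap_mul (g : Fin n → ℝ) (a b : Fin n) (hg : g a = g b) (x : Fin n → ℝ) :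
    ∑ j, g j * x (Equiv.swap a b j) = ∑ j, g j * x j := by
  have h2 : ∑ j, g (Equiv.swap a b j) * x (Equiv.swap a b j) = ∑ j, g j * x j :=
    Equiv.sum_comp (Equiv.swap a b) (fun k => g k * x k)
  rw [← h2]
  exact Finset.sum_congr rfl fun j _ => by rw [swap_eval g a b hg]

lemma consSat_swap (G : MILP m n) (a b : Fin n)
    (hA : ∀ i, MILP.A G i a = MILP.A G i b) (x : Fin n → ℝ) (hx : consSat G x) :
    consSat G (fun j => x (Equiv.swap a b j)) := by
  intro i
  have hs := sum_swap_mul (MILP.A G i) a b (hA i) x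
  simpa [hs] using hx i

lemma mem_lpFeasSet_swap (G : MILP m n) (a b : Fin n)
    (hA : ∀ i, MILP.A G i a = MILP.A G i b)
    (hlo : MILP.lo G a = MILP.lo G b) (hhi : MILP.hi G a = MILP.hi G b)
    {x : Fin n → ℝ} (hx : x ∈ lpFeasSet G) :
    (fun j => x (Equiv.swap a b j)) ∈ lpFeasSet G := by
  refine ⟨consSat_swap G a b hA x hx.1, fun j => ?_⟩
  have h1 := (hx.2 (Equiv.swap a b j)).1
  have h2 := (hx.2 (Equiv.swap a b j)).2
  constructor
  · rw [← swap_eval (MILP.lo G) a b hlo j]; exact h1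
  · rw [← swap_eval (MILP.hi G) a b hhi j]; exact h2

lemma senseRel_mid {s : Sense} {p q r : ℝ} (h1 : senseRel s p r) (h2 : senseRel s q r) :
    senseRel s ((p + q) / 2) r := by
  unfold senseRel at h1 h2 ⊢
  split_ifs at h1 h2 ⊢ <;> linarith

lemma mem_lpFeasSet_mid (G : MILP m n) {x y : Fin n → ℝ}
    (hx : x ∈ lpFeasSet G) (hy : y ∈ lpFeasSet G) :
    (fun j => (x j + y j) / 2) ∈ lpFeasSet G := by
  constructor
  · intro i
    have hsum : ∑ j, MILP.A G i j * ((x j + y j) / 2)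
        = ((∑ j, MILP.A G i j * x j) + ∑ j, MILP.A G i j * y j) / 2 := by
      calc ∑ j, MILP.A G i j * ((x j + y j) / 2)
          = ∑ j, (MILP.A G i j * x j + MILP.A G i j * y j) / 2 :=
            Finset.sum_congr rfl fun j _ => by ring
        _ = (∑ j, (MILP.A G i j * x j + MILP.A G i j * y j)) / 2 := (Finset.sum_div _ _ _).symm
        _ = ((∑ j, MILP.A G i j * x j) + ∑ j, MILP.A G i j * y j) / 2 := by
            rw [Finset.sum_add_distrib]
    have h1 := hx.1 i
    have h2 := hy.1 i
    simpa [hsum] using senseRel_mid h1 h2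
  · intro j
    have h1 := hx.2 j
    have h2 := hy.2 j
    constructor
    · rcases hE : MILP.lo G j with a | u
      · rw [hE] at h1
        have hx1 : a ≤ x j := h1.1
        have hy1 : a ≤ y j := by have := h2.1; rw [hE] at this; exact this
        show a ≤ (x j + y j) / 2
        linarith
      · trivial
    · rcases hE : MILP.hi G j with a | u
      · rw [hE] at h1
        have hx1 : x j ≤ a := h1.2
        have hy1 : y j ≤ a := by have := h2.2; rw [hE] at this; exact this
        show (x j + y j) / 2 ≤ a
        linarith
      · trivial

lemma min_norm_unique (G : MILP m n) {x y : Fin n → ℝ}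
    (hx : IsMinNormOpt G x) (hy : IsMinNormOpt G y) : x = y := by
  have hnxy : euclNorm x = euclNorm y := le_antisymm (hx.2 y hy.1) (hy.2 x hx.1)
  have hsq : ∀ z : Fin n → ℝ, euclNorm z ^ 2 = ∑ j, z j ^ 2 := fun z =>
    Real.sq_sqrt (Finset.sum_nonneg fun j _ => sq_nonneg _)
  have hobj : ∑ j, MILP.c G j * x j = ∑ j, MILP.c G j * y j := by
    have := hx.1.2.trans hy.1.2.symm
    exact_mod_cast this
  set z : Fin n → ℝ := fun j => (x j + y j) / 2 with hz
  have hzfeas : z ∈ lpFeasSet G := mem_lpFeasSet_mid G hx.1.1 hy.1.1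
  have hzobj : ∑ j, MILP.c G j * z j = ∑ j, MILP.c G j * x j := by
    have : ∑ j, MILP.c G j * z j
        = ((∑ j, MILP.c G j * x j) + ∑ j, MILP.c G j * y j) / 2 := by
      calc ∑ j, MILP.c G j * z j
          = ∑ j, (MILP.c G j * x j + MILP.c G j * y j) / 2 :=
            Finset.sum_congr rfl fun j _ => by simp only [hz]; ring
        _ = (∑ j, (MILP.c G j * x j + MILP.c G j * y j)) / 2 := (Finset.sum_div _ _ _).symm
        _ = ((∑ j, MILP.c G j * x j) + ∑ j, MILP.c G j * y j) / 2 := by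
            rw [Finset.sum_add_distrib]
    rw [this, ← hobj]; ring
  have hzopt : IsOptSol G z := by
    refine ⟨hzfeas, ?_⟩
    rw [show ((∑ j, MILP.c G j * z j : ℝ) : EReal)
        = ((∑ j, MILP.c G j * x j : ℝ) : EReal) from congrArg _ hzobj]
    exact hx.1.2
  have hle : euclNorm x ≤ euclNorm z := hx.2 z hzopt
  have hle2 : ∑ j, x j ^ 2 ≤ ∑ j, z j ^ 2 := by
    rw [← hsq x, ← hsq z]
    exact pow_le_pow_left₀ (Real.sqrt_nonneg _) hle 2
  have hSxy : ∑ j, x j ^ 2 = ∑ j, y j ^ 2 := by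
    rw [← hsq x, ← hsq y, hnxy]
  have hiden : ∑ j, z j ^ 2 + ∑ j, ((x j - y j) / 2) ^ 2
      = ((∑ j, x j ^ 2) + ∑ j, y j ^ 2) / 2 := by
    calc ∑ j, z j ^ 2 + ∑ j, ((x j - y j) / 2) ^ 2
        = ∑ j, (z j ^ 2 + ((x j - y j) / 2) ^ 2) := (Finset.sum_add_distrib).symm
      _ = ∑ j, (x j ^ 2 + y j ^ 2) / 2 :=
          Finset.sum_congr rfl fun j _ => by simp only [hz]; ring
      _ = (∑ j, (x j ^ 2 + y j ^ 2)) / 2 := (Finset.sum_div _ _ _).symm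
      _ = ((∑ j, x j ^ 2) + ∑ j, y j ^ 2) / 2 := by rw [Finset.sum_add_distrib]
  have hd0 : ∑ j, ((x j - y j) / 2) ^ 2 = 0 := by
    have hnn : 0 ≤ ∑ j, ((x j - y j) / 2) ^ 2 :=
      Finset.sum_nonneg fun j _ => sq_nonneg _
    nlinarith
  funext j
  have hj := (Finset.sum_eq_zero_iff_of_nonneg
    (fun j _ => sq_nonneg ((x j - y j) / 2))).1 hd0 j (Finset.mem_univ j)
  have : (x j - y j) / 2 = 0 := by
    exact pow_eq_zero_iff two_ne_zero |>.mp hj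
  linarith

lemma lpValMod_swap_le (G : MILP m n) (a b : Fin n)
    (hA : ∀ i, MILP.A G i a = MILP.A G i b) (hc : MILP.c G a = MILP.c G b)
    (hlo : MILP.lo G a = MILP.lo G b) (hhi : MILP.hi G a = MILP.hi G b)
    (L : ExtLo) (H : ExtHi) :
    lpValMod G a L H ≤ lpValMod G b L H := by
  unfold lpValMod lpVal
  refine le_iInf₂ fun x hx => ?_
  obtain ⟨h1, h2, h3, h4⟩ := hx
  have hmem : (fun j => x (Equiv.swap a b j)) ∈ feasSetMod G a L H := by
    refine ⟨consSat_swap G a b hA x h1, ?_, ?_, ?_⟩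
    · intro j' hj'
      rcases eq_or_ne j' b with hj2 | hjb
      · have hsw : (Equiv.swap a b) j' = a := by rw [hj2, Equiv.swap_apply_right]
        show loSat (MILP.lo G j') (x (Equiv.swap a b j')) ∧
          hiSat (MILP.hi G j') (x (Equiv.swap a b j'))
        rw [hsw, hj2, ← hlo, ← hhi]
        exact h2 a (Ne.symm (hj2 ▸ hj'))
      · show loSat (MILP.lo G j') (x (Equiv.swap a b j')) ∧
          hiSat (MILP.hi G j') (x (Equiv.swap a b j'))
        rw [Equiv.swap_apply_of_ne_of_ne hj' hjb]
        exact h2 j' hjb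
    · show loSat L (x (Equiv.swap a b a))
      rw [Equiv.swap_apply_left]
      exact h3
    · show hiSat H (x (Equiv.swap a b a))
      rw [Equiv.swap_apply_left]
      exact h4
  refine le_trans (iInf₂_le (fun j => x (Equiv.swap a b j)) hmem) (le_of_eq ?_)
  exact congrArg _ (sum_swap_mul (MILP.c G) a b hc x)

end AuxSB

/-- In an MP-tractable MILP instance with real-valued SB scores, two
variables with identical WL colors at every round have equal SB scores. -/
theorem SB_entry_eq_of_same_WColor_of_MPTractable
    {m n : ℕ} (G : MILP m n) (hG : MPTractable G) (hSB : SBRealValued G)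
    (j1 j2 : Fin n) (h : ∀ l, (wl G l).2 j1 = (wl G l).2 j2) :
    SB G j1 = SB G j2 := by
  classical
  have h0 := h 0
  have hc : MILP.c G j1 = MILP.c G j2 := congrArg (fun p : WFeat => p.1) h0
  have hlo : MILP.lo G j1 = MILP.lo G j2 := congrArg (fun p : WFeat => p.2.1) h0
  have hhi : MILP.hi G j1 = MILP.hi G j2 := congrArg (fun p : WFeat => p.2.2.1) h0
  have hint : MILP.isInt G j1 = MILP.isInt G j2 := congrArg (fun p : WFeat => p.2.2.2) h0
  have hA : ∀ i, MILP.A G i j1 = MILP.A G i j2 := fun i => hG i i j1 j2 (fun _ => rfl) h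
  have hx : IsMinNormOpt G (xstar G) := by
    have hex := hSB.1
    unfold xstar
    rw [dif_pos hex]
    exact hex.choose_spec
  set σ := Equiv.swap j1 j2 with hσ
  have hswap : IsMinNormOpt G (fun j => xstar G (σ j)) := by
    obtain ⟨⟨hfeas, hopt⟩, hmin⟩ := hx
    have hfeas' := mem_lpFeasSet_swap G j1 j2 hA hlo hhi hfeas
    have hobj : ∑ j, MILP.c G j * xstar G (σ j) = ∑ j, MILP.c G j * xstar G j :=
      sum_swap_mul _ j1 j2 hc _
    have hnorm : euclNorm (fun j => xstar G (σ j)) = euclNorm (xstar G) := by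
      unfold euclNorm
      congr 1
      exact Equiv.sum_comp σ (fun j => xstar G j ^ 2)
    refine ⟨⟨hfeas', ?_⟩, fun y hy => ?_⟩
    · show ((∑ j, MILP.c G j * xstar G (σ j) : ℝ) : EReal) = fstar G
      rw [hobj]
      exact hopt
    · rw [hnorm]
      exact hmin y hy
  have hx' : IsMinNormOpt G (xstar G) := by
    have hex := hSB.1
    unfold xstar
    rw [dif_pos hex]
    exact hex.choose_spec
  have hxx := min_norm_unique G hswap hx'
  have hx12 : xstar G j1 = xstar G j2 := by
    have hj := congrFun hxx j2
    simpa [hσ, Equiv.swap_apply_right] using hj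
  have hbd : branchDown G j1 = branchDown G j2 := by
    unfold branchDown
    rw [hx12, hlo]
    exact le_antisymm
      (lpValMod_swap_le G j1 j2 hA hc hlo hhi _ _)
      (lpValMod_swap_le G j2 j1 (fun i => (hA i).symm) hc.symm hlo.symm hhi.symm _ _)
  have hbu : branchUp G j1 = branchUp G j2 := by
    unfold branchUp
    rw [hx12, hhi]
    exact le_antisymm
      (lpValMod_swap_le G j1 j2 hA hc hlo hhi _ _)
      (lpValMod_swap_le G j2 j1 (fun i => (hA i).symm) hc.symm hlo.symm hhi.symm _ _)
  simp only [SB]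
  rw [hint, hbd, hbu]
end
end

section
/- Let G and Ḡ be MILP instances of size (m,n), both MP-tractable, with G ∼^W Ḡ. Then there exists a permutation σ_V of {1,…,m} such that G = (σ_V, id)∗Ḡ; that is, A_{ij} = Ā_{σ_V^{−1}(i) j}, b_i = b̄_{σ_V^{−1}(i)} and ∘_i = ∘̄_{σ_V^{−1}(i)} for all i∈{1,…,m} and j∈{1,…,n}, and c = c̄, l = l̄, u = ū, I = Ī. -/
open scoped BigOperators Classical
open MeasureTheory

noncomputable section

/-- Two MP-tractable MILP instances that are indistinguishable by the
WL test (in the sense `G ∼^W Ḡ`) are equal up to a relabeling of the constraints. -/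
theorem eq_up_to_constraint_perm_of_WLEquivW_of_MPTractable
    {m n : ℕ} (G H : MILP m n)
    (hG : MPTractable G) (hH : MPTractable H)
    (h : WLEquivW G H) :
    ∃ σ : Equiv.Perm (Fin m),
      (∀ i j, MILP.A G i j = MILP.A H (σ.symm i) j) ∧
      (∀ i, MILP.b G i = MILP.b H (σ.symm i)) ∧
      (∀ i, MILP.sense G i = MILP.sense H (σ.symm i)) ∧
      MILP.c G = MILP.c H ∧ MILP.lo G = MILP.lo H ∧
      MILP.hi G = MILP.hi H ∧ MILP.isInt G = MILP.isInt H := by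
  classical
  -- combined colorings on the disjoint union of the constraint sets
  set cV : ∀ l : ℕ, (Fin m ⊕ Fin m) → VColor l :=
    fun l => Sum.elim (wl G l).1 (wl H l).1 with hcV
  set cW : ∀ l : ℕ, Fin n → WColor l := fun l => (wl G l).2 with hcWdef
  have hWH : ∀ l j, (wl H l).2 j = cW l j := fun l j => ((h l).2 j).symm
  have monoV : ∀ (l : ℕ) (v v' : Fin m ⊕ Fin m),
      cV (l + 1) v = cV (l + 1) v' → cV l v = cV l v' := by
    intro l v v' hvv
    have h1 := congrArg Prod.fst hvv
    cases v <;> cases v' <;> simpa [hcV, wl] using h1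
  have monoW : ∀ (l : ℕ) (j j' : Fin n),
      cW (l + 1) j = cW (l + 1) j' → cW l j = cW l j' := by
    intro l j j' hjj
    have h1 := congrArg Prod.fst hjj
    simpa [hcWdef, wl] using h1
  -- the kernel of the colorings at level l, as a finset
  set K : ℕ → Finset (((Fin m ⊕ Fin m) × (Fin m ⊕ Fin m)) ⊕ (Fin n × Fin n)) :=
    fun l => Finset.univ.filter
      (Sum.elim (fun p => cV l p.1 = cV l p.2) (fun p => cW l p.1 = cW l p.2)) with hK
  have memK : ∀ (l : ℕ) x, x ∈ K l ↔
      Sum.elim (fun p => cV l p.1 = cV l p.2) (fun p => cW l p.1 = cW l p.2) x := by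
    intro l x
    simp [hK]
  have Kanti : ∀ l, K (l + 1) ⊆ K l := by
    intro l x hx
    rw [memK] at hx ⊢
    cases x with
    | inl p => exact monoV l p.1 p.2 hx
    | inr p => exact monoW l p.1 p.2 hx
  have Kanti' : ∀ l l', l ≤ l' → K l' ⊆ K l := by
    intro l l' hle
    induction hle with
    | refl => exact Finset.Subset.refl _
    | step _ ih => exact fun x hx => ih (Kanti _ hx)
  -- the partitions stabilize at some level L
  obtain ⟨L, hL⟩ : ∃ L, ∀ l, (K L).card ≤ (K l).card := by
    obtain ⟨v, ⟨L, rfl⟩, hmin⟩ := Nat.lt_wfRel.wf.has_min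
      (Set.range fun l => (K l).card) ⟨_, 0, rfl⟩
    exact ⟨L, fun l => Nat.le_of_not_lt (hmin _ ⟨l, rfl⟩)⟩
  have Keq : ∀ l, L ≤ l → K l = K L := fun l hl =>
    Finset.eq_of_subset_of_card_le (Kanti' L l hl) (hL l)
  have keyV : ∀ (v v' : Fin m ⊕ Fin m), cV L v = cV L v' → ∀ l, cV l v = cV l v' := by
    intro v v' hvv l
    have hx : Sum.inl (v, v') ∈ K L := (memK L _).2 hvv
    rcases le_total l L with hl | hl
    · exact (memK l _).1 (Kanti' l L hl hx)
    · exact (memK l _).1 ((Keq l hl).symm ▸ hx)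
  have keyW : ∀ (j j' : Fin n), cW L j = cW L j' → ∀ l, cW l j = cW l j' := by
    intro j j' hjj l
    have hx : Sum.inr (j, j') ∈ K L := (memK L _).2 hjj
    rcases le_total l L with hl | hl
    · exact (memK l _).1 (Kanti' l L hl hx)
    · exact (memK l _).1 ((Keq l hl).symm ▸ hx)
  -- construct the matching of constraints from the multiset equality at level L
  have hcard : ∀ c : VColor L,
      Fintype.card { i // (wl G L).1 i = c } = Fintype.card { i // (wl H L).1 i = c } := by
    intro c
    have hc := congrArg (Multiset.count c) (h L).1
    rw [Multiset.count_map, Multiset.count_map] at hc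
    rw [Fintype.card_subtype, Fintype.card_subtype]
    have conv1 : ∀ (f : Fin m → VColor L),
        Multiset.card (Multiset.filter (fun a => c = f a) Finset.univ.val)
          = (Finset.filter (fun x => f x = c) Finset.univ).card := by
      intro f
      rw [Finset.card_def, Finset.filter_val]
      exact congrArg Multiset.card (Multiset.filter_congr (fun a _ => eq_comm))
    rw [← conv1, ← conv1]
    exact hc
  let e : Fin m ≃ Fin m := Equiv.ofFiberEquiv (f := (wl G L).1) (g := (wl H L).1)
    (fun c => Fintype.equivOfCardEq (hcard c))
  have he : ∀ i, (wl H L).1 (e i) = (wl G L).1 i := fun i => Equiv.ofFiberEquiv_map _ i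
  have hAll : ∀ i l, (wl G l).1 i = (wl H l).1 (e i) := by
    intro i l
    have := keyV (Sum.inl i) (Sum.inr (e i)) (by simpa [hcV] using (he i).symm) l
    simpa [hcV] using this
  -- all-level W-color equalities within G and within H from the level-L one
  have keyWG : ∀ (j j' : Fin n), (wl G L).2 j = (wl G L).2 j' →
      ∀ l, (wl G l).2 j = (wl G l).2 j' := by
    intro j j' hjj l
    simpa [hcWdef] using keyW j j' (by simpa [hcWdef] using hjj) l
  have keyWH : ∀ (j j' : Fin n), (wl H L).2 j = (wl H L).2 j' →
      ∀ l, (wl H l).2 j = (wl H l).2 j' := by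
    intro j j' hjj l
    have h0 : cW L j = cW L j' := by
      rw [← hWH L j, ← hWH L j']; exact hjj
    have := keyW j j' h0 l
    rw [hWH l j, hWH l j', this]
  -- equality of A entries
  have hA : ∀ i j, MILP.A G i j = MILP.A H (e i) j := by
    intro i j
    have hms : ((Finset.univ.filter (fun j' => MILP.A G i j' ≠ 0)).val.map
          (fun j' => ((wl G L).2 j', MILP.A G i j')))
        = ((Finset.univ.filter (fun j' => MILP.A H (e i) j' ≠ 0)).val.map
          (fun j' => ((wl H L).2 j', MILP.A H (e i) j'))) := by
      have h1 := hAll i (L + 1)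
      simpa [wl] using congrArg Prod.snd h1
    by_cases ha : MILP.A G i j = 0
    · by_cases hb : MILP.A H (e i) j = 0
      · rw [ha, hb]
      · exfalso
        have hmem : ((wl H L).2 j, MILP.A H (e i) j) ∈
            ((Finset.univ.filter (fun j' => MILP.A H (e i) j' ≠ 0)).val.map
              (fun j' => ((wl H L).2 j', MILP.A H (e i) j'))) :=
          Multiset.mem_map.2 ⟨j, by simp [hb], rfl⟩
        rw [← hms] at hmem
        obtain ⟨j', hj', hj'eq⟩ := Multiset.mem_map.1 hmem
        have hj'ne : MILP.A G i j' ≠ 0 := by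
          simpa using hj'
        have hcol : (wl G L).2 j' = (wl G L).2 j := by
          have h1 := congrArg Prod.fst hj'eq
          simp only at h1
          exact h1.trans ((h L).2 j).symm
        have := hG i i j' j (fun _ => rfl) (fun l => keyWG j' j hcol l)
        exact hj'ne (this.trans ha)
    · have hmem : ((wl G L).2 j, MILP.A G i j) ∈
          ((Finset.univ.filter (fun j' => MILP.A G i j' ≠ 0)).val.map
            (fun j' => ((wl G L).2 j', MILP.A G i j'))) :=
        Multiset.mem_map.2 ⟨j, by simp [ha], rfl⟩
      rw [hms] at hmem
      obtain ⟨j', hj', hj'eq⟩ := Multiset.mem_map.1 hmem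
      have hcol : (wl H L).2 j' = (wl H L).2 j := by
        have h1 := congrArg Prod.fst hj'eq
        simp only at h1
        exact h1.trans ((h L).2 j)
      have h2 : MILP.A H (e i) j' = MILP.A H (e i) j :=
        hH (e i) (e i) j' j (fun _ => rfl) (fun l => keyWH j' j hcol l)
      have h3 := congrArg Prod.snd hj'eq
      simp only at h3
      rw [← h2, h3]
  refine ⟨e.symm, ?_, ?_, ?_, ?_, ?_, ?_, ?_⟩
  · intro i j; simpa using hA i j
  · intro i
    have h0 := hAll i 0
    have := congrArg Prod.fst h0
    simpa [wl, MILP.b] using this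
  · intro i
    have h0 := hAll i 0
    have := congrArg Prod.snd h0
    simpa [wl, MILP.sense] using this
  · funext j
    have h0 := (h 0).2 j
    simpa [wl, MILP.c] using congrArg Prod.fst h0
  · funext j
    have h0 := (h 0).2 j
    simpa [wl, MILP.lo] using congrArg (fun p => p.2.1) h0
  · funext j
    have h0 := (h 0).2 j
    simpa [wl, MILP.hi] using congrArg (fun p => p.2.2.1) h0
  · funext j
    have h0 := (h 0).2 j
    simpa [wl, MILP.isInt] using congrArg (fun p => p.2.2.2) h0
end
end
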